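/- arXiv:2009.12511 — 12 statements merged into one kernel-verified Lean document; each statement's English description precedes it below -/
import Mathlib

section
/- Let S be a finite set and let v, v' : S → ℝ satisfy 0 ≤ v_i ≤ v'_i for every i ∈ S. Then Σ_{i∈S} | v'_i/(1 + Σ_{j∈S} v'_j) − v_i/(1 + Σ_{j∈S} v_j) | ≤ (2/(1 + Σ_{j∈S} v_j)) · Σ_{i∈S} (v'_i − v_i). -/
/-- **Lemma (Lipschitz-type bound for MNL probabilities).**
If `0 ≤ v i ≤ v' i` for all `i ∈ S`, then
`∑_{i∈S} |v'_i/(1+∑_S v') − v_i/(1+∑_S v)| ≤ (2/(1+∑_S v)) ∑_{i∈S} (v'_i − v_i)`. -/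
theorem mnl_lipschitz_small_denom {ι : Type*} (S : Finset ι) (v v' : ι → ℝ)
    (h : ∀ i ∈ S, 0 ≤ v i ∧ v i ≤ v' i) :
    ∑ i ∈ S, |v' i / (1 + ∑ j ∈ S, v' j) - v i / (1 + ∑ j ∈ S, v j)| ≤
      (2 / (1 + ∑ j ∈ S, v j)) * ∑ i ∈ S, (v' i - v i) := by
  set A := 1 + ∑ j ∈ S, v j with hA
  set B := 1 + ∑ j ∈ S, v' j with hB
  have hv0 : 0 ≤ ∑ j ∈ S, v j := Finset.sum_nonneg fun i hi => (h i hi).1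
  have hle : ∑ j ∈ S, v j ≤ ∑ j ∈ S, v' j := Finset.sum_le_sum fun i hi => (h i hi).2
  have hA0 : 0 < A := by rw [hA]; linarith
  have hB0 : 0 < B := by rw [hB]; linarith
  have hAB : A ≤ B := by rw [hA, hB]; linarith
  have hD : ∑ i ∈ S, (v' i - v i) = B - A := by
    rw [Finset.sum_sub_distrib, hA, hB]; ring
  have key : ∀ i ∈ S, |v' i / B - v i / A| ≤
      (A * (v' i - v i) + (B - A) * v i) / (A * B) := by
    intro i hi
    obtain ⟨h1, h2⟩ := h i hi
    have heq : v' i / B - v i / A = (A * v' i - B * v i) / (A * B) := by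
      field_simp
    rw [heq, abs_div, abs_of_pos (mul_pos hA0 hB0),
      div_le_div_iff_of_pos_right (mul_pos hA0 hB0), abs_le]
    constructor <;> nlinarith
  calc ∑ i ∈ S, |v' i / B - v i / A|
      ≤ ∑ i ∈ S, (A * (v' i - v i) + (B - A) * v i) / (A * B) :=
        Finset.sum_le_sum key
    _ = (A * (B - A) + (B - A) * (A - 1)) / (A * B) := by
        rw [← Finset.sum_div]
        congr 1
        rw [Finset.sum_add_distrib, ← Finset.mul_sum, ← Finset.mul_sum, hD]
        have : ∑ i ∈ S, v i = A - 1 := by rw [hA]; ring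
        rw [this]
    _ ≤ (2 / A) * (B - A) := by
        rw [div_le_iff₀ (by positivity)]
        have : (2 / A) * (B - A) * (A * B) = 2 * B * (B - A) := by
          field_simp
        rw [this]
        nlinarith
    _ = (2 / A) * ∑ i ∈ S, (v' i - v i) := by rw [hD]
end

section
/- Let S be a finite set and let v, v' : S → ℝ satisfy 0 ≤ v_i ≤ v'_i for every i ∈ S. Then Σ_{i∈S} | v'_i/(1 + Σ_{j∈S} v'_j) − v_i/(1 + Σ_{j∈S} v_j) | ≤ (2/(1 + Σ_{j∈S} v'_j)) · Σ_{i∈S} (v'_i − v_i); that is, the Lipschitz-type bound holds even with the larger denominator 1 + Σ_{j∈S} v'_j. -/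
/-- **Lemma (Lipschitz-type bound for MNL probabilities, larger denominator).**
If `0 ≤ v i ≤ v' i` for all `i ∈ S`, then
`∑_{i∈S} |v'_i/(1+∑_S v') − v_i/(1+∑_S v)| ≤ (2/(1+∑_S v')) ∑_{i∈S} (v'_i − v_i)`. -/
theorem mnl_lipschitz_large_denom {ι : Type*} (S : Finset ι) (v v' : ι → ℝ)
    (h : ∀ i ∈ S, 0 ≤ v i ∧ v i ≤ v' i) :
    ∑ i ∈ S, |v' i / (1 + ∑ j ∈ S, v' j) - v i / (1 + ∑ j ∈ S, v j)| ≤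
      (2 / (1 + ∑ j ∈ S, v' j)) * ∑ i ∈ S, (v' i - v i) := by
  set A := ∑ j ∈ S, v j with hAdef
  set B := ∑ j ∈ S, v' j with hBdef
  have hA : 0 ≤ A := Finset.sum_nonneg fun i hi => (h i hi).1
  have hAB : A ≤ B := Finset.sum_le_sum fun i hi => (h i hi).2
  have h1A : (0:ℝ) < 1 + A := by linarith
  have h1B : (0:ℝ) < 1 + B := by linarith
  have key : ∀ i ∈ S, |v' i / (1 + B) - v i / (1 + A)| ≤
      (v' i - v i) / (1 + B) + v i * (B - A) / ((1 + A) * (1 + B)) := by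
    intro i hi
    obtain ⟨h0, h1⟩ := h i hi
    have heq : v' i / (1 + B) - v i / (1 + A) =
        (v' i - v i) / (1 + B) - v i * (B - A) / ((1 + A) * (1 + B)) := by
      field_simp
      ring
    rw [heq]
    have t1 : 0 ≤ (v' i - v i) / (1 + B) := div_nonneg (by linarith) h1B.le
    have t2 : 0 ≤ v i * (B - A) / ((1 + A) * (1 + B)) := by
      apply div_nonneg (by nlinarith) (by positivity)
    calc |(v' i - v i) / (1 + B) - v i * (B - A) / ((1 + A) * (1 + B))|
        ≤ |(v' i - v i) / (1 + B)| + |v i * (B - A) / ((1 + A) * (1 + B))| :=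
          abs_sub _ _
      _ = (v' i - v i) / (1 + B) + v i * (B - A) / ((1 + A) * (1 + B)) := by
          rw [abs_of_nonneg t1, abs_of_nonneg t2]
  calc ∑ i ∈ S, |v' i / (1 + B) - v i / (1 + A)|
      ≤ ∑ i ∈ S, ((v' i - v i) / (1 + B) + v i * (B - A) / ((1 + A) * (1 + B))) :=
        Finset.sum_le_sum key
    _ = (B - A) / (1 + B) + A * (B - A) / ((1 + A) * (1 + B)) := by
        rw [Finset.sum_add_distrib, ← Finset.sum_div, Finset.sum_sub_distrib,
          ← Finset.sum_div]
        rw [show ∀ x : ℝ, (∑ i ∈ S, v i * (B - A)) / x = (A * (B - A)) / x from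
          fun x => by rw [← Finset.sum_mul, ← hAdef]]
    _ ≤ (2 / (1 + B)) * (B - A) := by
        rw [div_add_div _ _ (ne_of_gt h1B) (by positivity), div_mul_eq_mul_div,
          div_le_div_iff₀ (by positivity) h1B]
        nlinarith [mul_nonneg hA (sub_nonneg.2 hAB), sq_nonneg (1 + B),
          mul_nonneg (mul_nonneg hA (sub_nonneg.2 hAB)) (sq_nonneg (1 + B))]
  rw [Finset.sum_sub_distrib, ← hAdef, ← hBdef]
end

section
/- Let n ≥ 1 and let V : ℝ^n → ℝ be quasiconvex on [0,1]^n. Let ū = (ū_1, …, ū_n) ∈ (0,1]^n be such that V(u) < V(ū) for every point u ∈ [0,1]^n with u ≠ ū whose coordinates satisfy u_i = ū_i or u_i = 0 for each i from 1 to n. Then V(u') ≥ V(ū) for every u' ∈ [0,1]^n with u' ≥ ū (coordinatewise). -/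
/-!
The strict sublevel set `{x | V x < V ū}` of a quasiconvex function is convex. It contains every
vertex of the box `[0, ū]` other than `ū`, hence every point of a face of the box where some
coordinate vanishes. If `u' ≥ ū` and `u' ≠ ū`, then moving from `u'` through `ū` until the first
coordinate hits zero lands on such a face, so `ū` lies on a segment from that face to `u'`;
were `V u' < V ū`, convexity would give `V ū < V ū`.
-/

open Set

theorem convexHull_pi_pair {𝕜 ι : Type*} [Finite ι] [Field 𝕜] [LinearOrder 𝕜]
    [IsStrictOrderedRing 𝕜] {a b : ι → 𝕜} (hab : a ≤ b) :
    convexHull 𝕜 (univ.pi fun i => ({a i, b i} : Set 𝕜)) = Icc a b := by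
  simp_rw [convexHull_pi, convexHull_pair, fun i => segment_eq_Icc (hab i), pi_univ_Icc]

theorem QuasiconvexOn.lt_of_mem_convexHull {𝕜 E β : Type*} [Semiring 𝕜] [PartialOrder 𝕜]
    [AddCommMonoid E] [Module 𝕜 E] [LinearOrder β] {s t : Set E} {f : E → β} {r : β} {x : E}
    (hf : QuasiconvexOn 𝕜 s f) (hts : t ⊆ s) (ht : ∀ y ∈ t, f y < r)
    (hx : x ∈ convexHull 𝕜 t) : f x < r :=
  ((hf.convex_lt r).convexHull_subset_iff.2 (fun y hy => ⟨hts hy, ht y hy⟩) hx).2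

theorem QuasiconvexOn.lt_of_mem_Icc_of_apply_eq_zero {ι : Type*} [Finite ι] {s : Set (ι → ℝ)}
    {V : (ι → ℝ) → ℝ} {ubar u : ι → ℝ} {j : ι} (hV : QuasiconvexOn ℝ s V) (hs : Icc 0 ubar ⊆ s)
    (hmax : ∀ v ∈ s, v ≠ ubar → (∀ i, v i = ubar i ∨ v i = 0) → V v < V ubar)
    (hubar : 0 ≤ ubar) (hubarj : ubar j ≠ 0) (hu : u ∈ Icc 0 ubar) (huj : u j = 0) :
    V u < V ubar := by
  classical
  -- The face `u j = 0` of `[0, ubar]` is the box `[0, b]`, whose vertices all vanish at `j`.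
  set b := Function.update ubar j 0
  have hb : 0 ≤ b := le_update_iff.2 ⟨le_rfl, fun i _ => hubar i⟩
  have hbubar : b ≤ ubar := update_le_iff.2 ⟨hubar j, fun _ _ => le_rfl⟩
  have hub : u ∈ Icc 0 b := ⟨hu.1, le_update_iff.2 ⟨huj.le, fun i _ => hu.2 i⟩⟩
  have hvert_s : univ.pi (fun i => ({0, b i} : Set ℝ)) ⊆ s :=
    (subset_convexHull ℝ _).trans <| (convexHull_pi_pair hb).trans_subset <|
      (Icc_subset_Icc_right hbubar).trans hs
  rw [← convexHull_pi_pair hb] at hub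
  refine hV.lt_of_mem_convexHull hvert_s (fun v hv => ?_) hub
  have hvert : ∀ i, v i = 0 ∨ v i = b i := by simpa using hv
  refine hmax v (hvert_s hv) (fun h => hubarj ?_) (fun i => ?_)
  · simpa [b, ← h] using hvert j
  · rcases eq_or_ne i j with rfl | hij
    · exact .inr (by simpa [b] using hvert i)
    · simpa [b, hij, or_comm] using hvert i

theorem exists_mem_Icc_apply_eq_zero_and_mem_segment {𝕜 ι : Type*} [Finite ι] [Field 𝕜]
    [LinearOrder 𝕜] [IsStrictOrderedRing 𝕜] {ubar u' : ι → 𝕜} (hubar : ∀ i, 0 < ubar i)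
    (hle : ubar ≤ u') (hne : ubar ≠ u') :
    ∃ w ∈ Icc 0 ubar, (∃ j, w j = 0) ∧ ubar ∈ segment 𝕜 w u' := by
  obtain ⟨k, hk⟩ := Function.ne_iff.1 hne
  have : Nonempty ι := ⟨k⟩
  have hu' : ∀ i, 0 < u' i := fun i => (hubar i).trans_le (hle i)
  -- `t` is the largest scalar with `t • u' ≤ ubar`.
  obtain ⟨j, hj⟩ := Finite.exists_min fun i => ubar i / u' i
  set t := ubar j / u' j
  have ht_le : ∀ i, t * u' i ≤ ubar i := fun i => (le_div_iff₀ (hu' i)).1 (hj i)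
  have ht0 : 0 ≤ t := (div_pos (hubar j) (hu' j)).le
  have h1t : 0 < 1 - t :=
    sub_pos.2 <| (hj k).trans_lt <| (div_lt_one (hu' k)).2 <| (hle k).lt_of_ne hk
  set w := (1 - t)⁻¹ • (ubar - t • u')
  refine ⟨w, ⟨fun i => ?_, fun i => ?_⟩, ⟨j, ?_⟩, 1 - t, t, h1t.le, ht0, by ring, ?_⟩
  · simpa [w] using mul_nonneg (inv_nonneg.2 h1t.le) (sub_nonneg.2 (ht_le i))
  · simp only [w, Pi.smul_apply, Pi.sub_apply, smul_eq_mul]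
    rw [inv_mul_le_iff₀ h1t]
    nlinarith [mul_le_mul_of_nonneg_left (hle i) ht0]
  · simp [w, t, div_mul_cancel₀ _ (hu' j).ne']
  · rw [smul_inv_smul₀ h1t.ne', sub_add_cancel]

theorem quasiconvex_monotone_point_general (n : ℕ) (V : (Fin n → ℝ) → ℝ)
    (hV : ∀ x y : Fin n → ℝ, (∀ i, x i ∈ Set.Icc (0:ℝ) 1) → (∀ i, y i ∈ Set.Icc (0:ℝ) 1) →
      ∀ l : ℝ, 0 ≤ l → l ≤ 1 → V (l • x + (1 - l) • y) ≤ max (V x) (V y))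
    (ubar : Fin n → ℝ) (hubar : ∀ i, 0 < ubar i ∧ ubar i ≤ 1)
    (hmax : ∀ u : Fin n → ℝ, (∀ i, u i ∈ Set.Icc (0:ℝ) 1) → u ≠ ubar →
      (∀ i, u i = ubar i ∨ u i = 0) → V u < V ubar) :
    ∀ u' : Fin n → ℝ, (∀ i, u' i ∈ Set.Icc (0:ℝ) 1) → (∀ i, ubar i ≤ u' i) →
      V ubar ≤ V u' := by
  intro u' hu' hle
  set cube : Set (Fin n → ℝ) := univ.pi fun _ => Icc 0 1
  have hquasi : QuasiconvexOn ℝ cube V := by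
    refine quasiconvexOn_iff_le_max.2 ⟨convex_pi fun _ _ => convex_Icc 0 1, ?_⟩
    intro x hx y hy a b ha _ hab
    obtain rfl : b = 1 - a := by linarith
    exact hV x y (mem_univ_pi.1 hx) (mem_univ_pi.1 hy) a ha (by linarith)
  rcases eq_or_ne ubar u' with rfl | hne
  · rfl
  obtain ⟨w, hw, ⟨j, hwj⟩, hseg⟩ :=
    exists_mem_Icc_apply_eq_zero_and_mem_segment (fun i => (hubar i).1) hle hne
  have hbox : Icc 0 ubar ⊆ cube := fun x hx =>
    mem_univ_pi.2 fun i => ⟨hx.1 i, (hx.2 i).trans (hubar i).2⟩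
  have hVw : V w < V ubar :=
    hquasi.lt_of_mem_Icc_of_apply_eq_zero hbox (fun v hv => hmax v (mem_univ_pi.1 hv))
      (fun i => (hubar i).1.le) (hubar j).1.ne' hw hwj
  by_contra! hlt
  exact ((hquasi.convex_lt _).segment_subset ⟨hbox hw, hVw⟩ ⟨mem_univ_pi.2 hu', hlt⟩ hseg).2.false

/-- **Lemma (Optimistic point for quasiconvex functions).**
Let `V` be quasiconvex on `[0,1]^n` and `ū ∈ (0,1]^n` be such that `V u < V ū` for every
`u ∈ [0,1]^n` different from `ū` whose coordinates satisfy `u i = ū i` or `u i = 0`.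
Then `V u' ≥ V ū` for every `u' ∈ [0,1]^n` with `u' ≥ ū` coordinatewise. -/
theorem quasiconvex_monotone_point (n : ℕ) (hn : 1 ≤ n) (V : (Fin n → ℝ) → ℝ)
    (hV : ∀ x y : Fin n → ℝ, (∀ i, x i ∈ Set.Icc (0:ℝ) 1) → (∀ i, y i ∈ Set.Icc (0:ℝ) 1) →
      ∀ l : ℝ, 0 ≤ l → l ≤ 1 → V (l • x + (1 - l) • y) ≤ max (V x) (V y))
    (ubar : Fin n → ℝ) (hubar : ∀ i, 0 < ubar i ∧ ubar i ≤ 1)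
    (hmax : ∀ u : Fin n → ℝ, (∀ i, u i ∈ Set.Icc (0:ℝ) 1) → u ≠ ubar →
      (∀ i, u i = ubar i ∨ u i = 0) → V u < V ubar) :
    ∀ u' : Fin n → ℝ, (∀ i, u' i ∈ Set.Icc (0:ℝ) 1) → (∀ i, ubar i ≤ u' i) →
      V ubar ≤ V u' :=
  quasiconvex_monotone_point_general n V hV ubar hubar hmax
end

section
/- Fix a finite set S of products with profits r_i ∈ (0,1] for i ∈ S, and let u, u' : S → ℝ be preference vectors with 0 ≤ u_i ≤ 1 and 0 ≤ u'_i ≤ 1 for all i ∈ S. For λ ∈ [0,1], set μ = λ(1 + Σ_{i∈S} u_i) / ( λ(1 + Σ_{i∈S} u_i) + (1−λ)(1 + Σ_{i∈S} u'_i) ). Then for every x ∈ ℝ, F(S, λu + (1−λ)u'; x) = μ · F(S, u; x) + (1−μ) · F(S, u'; x); i.e., the CDF of the MNL distribution at the convex combination λu + (1−λ)u' is the convex combination with weight μ of the CDFs at u and u'. -/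
/-- The CDF of the purchase-profit distribution of the MNL model with assortment `S`,
profits `r` and preference vector `v`:
`F(S,v;x) = (1 + ∑_{i∈S, r i ≤ x} v i)/(1 + ∑_{i∈S} v i)` for `x ≥ 0`, and `0` for `x < 0`. -/
noncomputable def mnlCDF {ι : Type*} (S : Finset ι) (r v : ι → ℝ) (x : ℝ) : ℝ :=
  if x < 0 then 0
  else (1 + ∑ i ∈ S.filter (fun i => r i ≤ x), v i) / (1 + ∑ i ∈ S, v i)

/-- **Lemma (MNL CDF at a convex combination of preference vectors).**
The CDF of the MNL distribution at `λ u + (1−λ) u'` is the convex combination with weight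
`μ = λ(1+∑u)/(λ(1+∑u)+(1−λ)(1+∑u'))` of the CDFs at `u` and `u'`. -/
theorem mnlCDF_convex_combination {ι : Type*} (S : Finset ι) (r : ι → ℝ)
    (hr : ∀ i ∈ S, 0 < r i ∧ r i ≤ 1)
    (u u' : ι → ℝ) (hu : ∀ i ∈ S, 0 ≤ u i ∧ u i ≤ 1) (hu' : ∀ i ∈ S, 0 ≤ u' i ∧ u' i ≤ 1)
    (l : ℝ) (hl0 : 0 ≤ l) (hl1 : l ≤ 1)
    (μ : ℝ)
    (hμ : μ = l * (1 + ∑ i ∈ S, u i) /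
      (l * (1 + ∑ i ∈ S, u i) + (1 - l) * (1 + ∑ i ∈ S, u' i))) :
    ∀ x : ℝ, mnlCDF S r (fun i => l * u i + (1 - l) * u' i) x =
      μ * mnlCDF S r u x + (1 - μ) * mnlCDF S r u' x := by
  intro x
  set A : ℝ := 1 + ∑ i ∈ S, u i with hA
  set B : ℝ := 1 + ∑ i ∈ S, u' i with hB
  have hAsum : (0:ℝ) ≤ ∑ i ∈ S, u i := Finset.sum_nonneg fun i hi => (hu i hi).1
  have hBsum : (0:ℝ) ≤ ∑ i ∈ S, u' i := Finset.sum_nonneg fun i hi => (hu' i hi).1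
  have hApos : (0:ℝ) < A := by positivity
  have hBpos : (0:ℝ) < B := by positivity
  have hDpos : (0:ℝ) < l * A + (1 - l) * B := by
    rcases eq_or_lt_of_le hl0 with h | h
    · have : l * A + (1 - l) * B = B := by rw [← h]; ring
      rw [this]; exact hBpos
    · have h1 : 0 < l * A := mul_pos h hApos
      have h2 : 0 ≤ (1 - l) * B := mul_nonneg (by linarith) hBpos.le
      linarith
  unfold mnlCDF
  by_cases hx : x < 0
  · simp [hx]
  · simp only [if_neg hx]
    rw [hμ]
    have hsum1 : ∑ i ∈ S.filter (fun i => r i ≤ x), (l * u i + (1 - l) * u' i)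
        = l * (∑ i ∈ S.filter (fun i => r i ≤ x), u i)
          + (1 - l) * (∑ i ∈ S.filter (fun i => r i ≤ x), u' i) := by
      rw [Finset.sum_add_distrib, Finset.mul_sum, Finset.mul_sum]
    have hsum2 : ∑ i ∈ S, (l * u i + (1 - l) * u' i)
        = l * (∑ i ∈ S, u i) + (1 - l) * (∑ i ∈ S, u' i) := by
      rw [Finset.sum_add_distrib, Finset.mul_sum, Finset.mul_sum]
    rw [hsum1, hsum2]
    have hden : 1 + (l * (∑ i ∈ S, u i) + (1 - l) * (∑ i ∈ S, u' i))
        = l * A + (1 - l) * B := by rw [hA, hB]; ring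
    rw [hden]
    field_simp
    ring
end

section
/- Fix a finite set S of products with profits r_i ∈ (0,1] for i ∈ S. Let D be a convex set of functions ℝ → ℝ containing the CDF F(S,u) (as a function of x) for every preference vector u ∈ [0,1]^S, and let U be a real-valued functional that is quasiconvex on D. Then the map u ↦ U(F(S,u)) is quasiconvex on [0,1]^S. -/
open Finset

theorem mnlCDF_mix_eq {ι : Type*} (S : Finset ι) (r v w : ι → ℝ) (l : ℝ)
    (hv : 1 + ∑ i ∈ S, v i ≠ 0) (hw : 1 + ∑ i ∈ S, w i ≠ 0)
    (hmix : l * (1 + ∑ i ∈ S, v i) + (1 - l) * (1 + ∑ i ∈ S, w i) ≠ 0) :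
    mnlCDF S r (fun i => l * v i + (1 - l) * w i) =
      (l * (1 + ∑ i ∈ S, v i) / (l * (1 + ∑ i ∈ S, v i) + (1 - l) * (1 + ∑ i ∈ S, w i))) •
          mnlCDF S r v +
        (1 - l * (1 + ∑ i ∈ S, v i) /
            (l * (1 + ∑ i ∈ S, v i) + (1 - l) * (1 + ∑ i ∈ S, w i))) • mnlCDF S r w := by
  have one_add_sum_mix : ∀ T : Finset ι, 1 + ∑ i ∈ T, (l * v i + (1 - l) * w i) =
      l * (1 + ∑ i ∈ T, v i) + (1 - l) * (1 + ∑ i ∈ T, w i) := fun T => by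
    rw [sum_add_distrib, ← mul_sum, ← mul_sum]
    ring
  funext x
  simp only [Pi.add_apply, Pi.smul_apply, smul_eq_mul, mnlCDF]
  split_ifs
  · ring
  · rw [one_add_sum_mix, one_add_sum_mix]
    field_simp
    ring

theorem one_le_one_add_sum {ι : Type*} {S : Finset ι} {v : ι → ℝ} (hv : ∀ i ∈ S, 0 ≤ v i) :
    1 ≤ 1 + ∑ i ∈ S, v i :=
  le_add_of_nonneg_right (sum_nonneg hv)

theorem mnl_risk_quasiconvex_general {ι : Type*} (S : Finset ι) (r : ι → ℝ)
    (Dset : Set (ℝ → ℝ))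
    (hDF : ∀ u : ι → ℝ, (∀ i ∈ S, 0 ≤ u i ∧ u i ≤ 1) → mnlCDF S r u ∈ Dset)
    (U : (ℝ → ℝ) → ℝ)
    (hU : ∀ F G : ℝ → ℝ, F ∈ Dset → G ∈ Dset → ∀ l : ℝ, 0 ≤ l → l ≤ 1 →
      U (l • F + (1 - l) • G) ≤ max (U F) (U G))
    (u u' : ι → ℝ) (hu : ∀ i ∈ S, 0 ≤ u i ∧ u i ≤ 1) (hu' : ∀ i ∈ S, 0 ≤ u' i ∧ u' i ≤ 1)
    (l : ℝ) (hl0 : 0 ≤ l) (hl1 : l ≤ 1) :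
    U (mnlCDF S r (fun i => l * u i + (1 - l) * u' i)) ≤
      max (U (mnlCDF S r u)) (U (mnlCDF S r u')) := by
  set A := 1 + ∑ i ∈ S, u i
  set B := 1 + ∑ i ∈ S, u' i
  have hA : 1 ≤ A := one_le_one_add_sum fun i hi => (hu i hi).1
  have hB : 1 ≤ B := one_le_one_add_sum fun i hi => (hu' i hi).1
  have hC : 0 < l * A + (1 - l) * B := by nlinarith
  rw [mnlCDF_mix_eq S r u u' l (by positivity) (by positivity) hC.ne']
  refine hU _ _ (hDF u hu) (hDF u' hu') _ (by positivity) ?_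
  rw [div_le_one hC]
  nlinarith

/-- **Lemma (quasiconvexity in the preference parameters).**
If `U` is quasiconvex on a convex set `D` of functions containing the MNL CDFs `F(S,u)` for
all `u ∈ [0,1]^S`, then `u ↦ U(F(S,u))` is quasiconvex on `[0,1]^S`. -/
theorem mnl_risk_quasiconvex {ι : Type*} (S : Finset ι) (r : ι → ℝ)
    (hr : ∀ i ∈ S, 0 < r i ∧ r i ≤ 1)
    (Dset : Set (ℝ → ℝ)) (hDconv : Convex ℝ Dset)
    (hDF : ∀ u : ι → ℝ, (∀ i ∈ S, 0 ≤ u i ∧ u i ≤ 1) → mnlCDF S r u ∈ Dset)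
    (U : (ℝ → ℝ) → ℝ)
    (hU : ∀ F G : ℝ → ℝ, F ∈ Dset → G ∈ Dset → ∀ l : ℝ, 0 ≤ l → l ≤ 1 →
      U (l • F + (1 - l) • G) ≤ max (U F) (U G))
    (u u' : ι → ℝ) (hu : ∀ i ∈ S, 0 ≤ u i ∧ u i ≤ 1) (hu' : ∀ i ∈ S, 0 ≤ u' i ∧ u' i ≤ 1)
    (l : ℝ) (hl0 : 0 ≤ l) (hl1 : l ≤ 1) :
    U (mnlCDF S r (fun i => l * u i + (1 - l) * u' i)) ≤
      max (U (mnlCDF S r u)) (U (mnlCDF S r u')) :=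
  mnl_risk_quasiconvex_general S r Dset hDF U hU u u' hu hu' l hl0 hl1
end

section
/- (Monotone Maximum) Let N ≥ 1 and 1 ≤ K ≤ N, with profits r_i ∈ (0,1] for i ∈ [N]. Let D be a convex set of functions ℝ → ℝ containing the CDF F(S,u) for every assortment S ⊆ [N] with |S| ≤ K and every u ∈ [0,1]^N, and let U be a functional that is quasiconvex on D. Let v, v' ∈ [0,1]^N with v'_i ≥ v_i for all i ∈ [N]. Let S* be an assortment of minimum cardinality among all S ⊆ [N] with |S| ≤ K maximizing U(F(S,v)). Then max_{S ⊆ [N], |S| ≤ K} U(F(S,v')) ≥ U(F(S*,v)). -/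
/-!
Raise the preferences from `v` to `v'` one product at a time. For an assortment `S` containing
`i`, the MNL distribution with the intermediate weight `u_i` is a mixture of the one without
`i` and the one with the raised weight `s ≥ u_i`: both are normalisations of the same
unnormalised measure, whose mass at `r_i` is `u_i`, `0` and `s`, and `u_i` is a convex
combination of `0` and `s`. Quasiconvexity of `U` then lets one of those two assortments,
each of size at most `|S|`, take over the value of `S`.
-/

/- `p + t q = (1 - t / s) p + (t / s) (p + s q)`, renormalised by the masses `a`, `a + t`,
`a + s`. When `s = 0` the weight is `0 / 0 = 0`. -/
lemma add_mul_div_add_eq_convex_combination {p q a t s : ℝ} (ha : 0 < a) (ht : 0 ≤ t)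
    (hts : t ≤ s) :
    (p + t * q) / (a + t) = a * (s - t) / (s * (a + t)) * (p / a)
      + (1 - a * (s - t) / (s * (a + t))) * ((p + s * q) / (a + s)) := by
  rcases (ht.trans hts).eq_or_lt with rfl | hs
  · obtain rfl : t = 0 := le_antisymm hts ht
    simp
  · field_simp
    ring

lemma convex_combination_weight_mem_Icc {a t s : ℝ} (ha : 0 < a) (ht : 0 ≤ t) (hts : t ≤ s) :
    a * (s - t) / (s * (a + t)) ∈ Set.Icc (0 : ℝ) 1 := by
  have hs := ht.trans hts
  refine ⟨div_nonneg (mul_nonneg ha.le (sub_nonneg.2 hts)) (by positivity),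
    div_le_one_of_le₀ ?_ (by positivity)⟩
  nlinarith

section MNL

variable {ι : Type*}

lemma mnlCDF_congr {S : Finset ι} {r u w : ι → ℝ} (h : ∀ j ∈ S, u j = w j) :
    mnlCDF S r u = mnlCDF S r w := by
  funext x
  unfold mnlCDF
  rw [Finset.sum_congr rfl h, Finset.sum_congr rfl fun j hj => h j (Finset.mem_filter.mp hj).1]

variable [DecidableEq ι]

lemma mnlCDF_update_of_notMem {S : Finset ι} {i : ι} (hi : i ∉ S) (r u : ι → ℝ) (s : ℝ) :
    mnlCDF S r (Function.update u i s) = mnlCDF S r u :=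
  mnlCDF_congr fun _ hj => Function.update_of_ne (ne_of_mem_of_not_mem hj hi) _ _

lemma mnlCDF_eq_of_mem {S : Finset ι} {i : ι} (hi : i ∈ S) (r u : ι → ℝ) {x : ℝ}
    (hx : ¬x < 0) :
    mnlCDF S r u x = (1 + ∑ j ∈ (S.erase i).filter (fun j => r j ≤ x), u j
      + u i * (if r i ≤ x then 1 else 0)) / (1 + ∑ j ∈ S.erase i, u j + u i) := by
  rw [mnlCDF, if_neg hx, ← Finset.sum_erase_add S u hi, ← add_assoc, Finset.filter_erase]
  split_ifs with hrx
  · rw [← Finset.sum_erase_add _ u (Finset.mem_filter.mpr ⟨hi, hrx⟩), mul_one, ← add_assoc]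
  · rw [Finset.erase_eq_of_notMem (s := S.filter _) (by simp [hrx]), mul_zero, add_zero]

lemma exists_mnlCDF_eq_convex_combination_update {S : Finset ι} {i : ι} (hi : i ∈ S)
    (r : ι → ℝ) {u : ι → ℝ} (hu : ∀ j ∈ S, 0 ≤ u j) {s : ℝ} (hus : u i ≤ s) :
    ∃ l : ℝ, 0 ≤ l ∧ l ≤ 1 ∧ mnlCDF S r u
      = l • mnlCDF (S.erase i) r u + (1 - l) • mnlCDF S r (Function.update u i s) := by
  have ha : 0 < 1 + ∑ j ∈ S.erase i, u j :=
    add_pos_of_pos_of_nonneg one_pos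
      (Finset.sum_nonneg fun j hj => hu j (Finset.mem_of_mem_erase hj))
  obtain ⟨hl0, hl1⟩ := convex_combination_weight_mem_Icc ha (hu i hi) hus
  refine ⟨_, hl0, hl1, funext fun x => ?_⟩
  by_cases hx : x < 0
  · simp [mnlCDF, hx]
  · have hnot : i ∉ S.erase i := Finset.notMem_erase i S
    simp only [Pi.add_apply, Pi.smul_apply, smul_eq_mul, mnlCDF_eq_of_mem hi _ _ hx,
      Function.update_self, Finset.sum_update_of_notMem hnot,
      Finset.sum_update_of_notMem (fun h => hnot (Finset.mem_of_mem_filter i h))]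
    rw [mnlCDF, if_neg hx]
    exact add_mul_div_add_eq_convex_combination ha (hu i hi) hus

end MNL

section Quasiconvex

variable {ι : Type*} [DecidableEq ι] {r : ι → ℝ} {K : ℕ} {D : Set (ℝ → ℝ)}
  {U : (ℝ → ℝ) → ℝ}

lemma update_mem_unit_cube {u : ι → ℝ} (hu : ∀ j, 0 ≤ u j ∧ u j ≤ 1) {i : ι} {s : ℝ}
    (hs : 0 ≤ s ∧ s ≤ 1) (j : ι) :
    0 ≤ Function.update u i s j ∧ Function.update u i s j ≤ 1 := by
  rcases eq_or_ne j i with rfl | hji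
  · rwa [Function.update_self]
  · rw [Function.update_of_ne hji]
    exact hu j

lemma exists_le_mnlCDF_update
    (hDF : ∀ S : Finset ι, S.card ≤ K → ∀ u : ι → ℝ,
      (∀ i, 0 ≤ u i ∧ u i ≤ 1) → mnlCDF S r u ∈ D)
    (hU : ∀ F G : ℝ → ℝ, F ∈ D → G ∈ D → ∀ l : ℝ, 0 ≤ l → l ≤ 1 →
      U (l • F + (1 - l) • G) ≤ max (U F) (U G))
    {S : Finset ι} (hS : S.card ≤ K) {u : ι → ℝ} (hu : ∀ j, 0 ≤ u j ∧ u j ≤ 1)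
    {i : ι} {s : ℝ} (hus : u i ≤ s) (hs : s ≤ 1) :
    ∃ S' : Finset ι, S'.card ≤ K ∧
      U (mnlCDF S r u) ≤ U (mnlCDF S' r (Function.update u i s)) := by
  by_cases hi : i ∈ S
  · obtain ⟨l, hl0, hl1, hdecomp⟩ :=
      exists_mnlCDF_eq_convex_combination_update hi r (fun j _ => (hu j).1) hus
    have hSi : (S.erase i).card ≤ K := (Finset.card_erase_le).trans hS
    have hmax := hU _ _ (hDF _ hSi u hu)
      (hDF S hS _ (update_mem_unit_cube (i := i) hu ⟨(hu i).1.trans hus, hs⟩)) l hl0 hl1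
    rw [← hdecomp] at hmax
    rcases le_max_iff.mp hmax with h | h
    · refine ⟨S.erase i, hSi, ?_⟩
      rwa [mnlCDF_update_of_notMem (Finset.notMem_erase i S)]
    · exact ⟨S, hS, h⟩
  · exact ⟨S, hS, (congrArg U (mnlCDF_update_of_notMem hi r u s)).ge⟩

lemma exists_le_mnlCDF_of_le [Fintype ι]
    (hDF : ∀ S : Finset ι, S.card ≤ K → ∀ u : ι → ℝ,
      (∀ i, 0 ≤ u i ∧ u i ≤ 1) → mnlCDF S r u ∈ D)
    (hU : ∀ F G : ℝ → ℝ, F ∈ D → G ∈ D → ∀ l : ℝ, 0 ≤ l → l ≤ 1 →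
      U (l • F + (1 - l) • G) ≤ max (U F) (U G))
    {S : Finset ι} (hS : S.card ≤ K) {u w : ι → ℝ} (hu : ∀ j, 0 ≤ u j ∧ u j ≤ 1)
    (hw : ∀ j, 0 ≤ w j ∧ w j ≤ 1) (huw : ∀ j, u j ≤ w j) :
    ∃ S' : Finset ι, S'.card ≤ K ∧ U (mnlCDF S r u) ≤ U (mnlCDF S' r w) := by
  suffices ∀ T : Finset ι, ∃ S' : Finset ι, S'.card ≤ K ∧
      U (mnlCDF S r u) ≤ U (mnlCDF S' r (T.piecewise w u)) by
    simpa using this Finset.univ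
  intro T
  induction T using Finset.induction_on with
  | empty => exact ⟨S, hS, by rw [Finset.piecewise_empty]⟩
  | insert i T hiT ih =>
    obtain ⟨S₀, hS₀, hle⟩ := ih
    have hT : ∀ j, 0 ≤ T.piecewise w u j ∧ T.piecewise w u j ≤ 1 := fun j =>
      T.piecewise_cases w u (fun x => 0 ≤ x ∧ x ≤ 1) (hw j) (hu j)
    obtain ⟨S', hS', hle'⟩ := exists_le_mnlCDF_update hDF hU hS₀ hT
      (i := i) (by rw [Finset.piecewise_eq_of_notMem _ _ _ hiT]; exact huw i) (hw i).2
    exact ⟨S', hS', hle.trans (by rwa [Finset.piecewise_insert])⟩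

end Quasiconvex

theorem monotone_maximum_general (N K : ℕ)
    (r : Fin N → ℝ)
    (Dset : Set (ℝ → ℝ))
    (hDF : ∀ S : Finset (Fin N), S.card ≤ K → ∀ u : Fin N → ℝ,
      (∀ i, 0 ≤ u i ∧ u i ≤ 1) → mnlCDF S r u ∈ Dset)
    (U : (ℝ → ℝ) → ℝ)
    (hU : ∀ F G : ℝ → ℝ, F ∈ Dset → G ∈ Dset → ∀ l : ℝ, 0 ≤ l → l ≤ 1 →
      U (l • F + (1 - l) • G) ≤ max (U F) (U G))
    (v v' : Fin N → ℝ) (hv : ∀ i, 0 ≤ v i ∧ v i ≤ 1) (hv' : ∀ i, 0 ≤ v' i ∧ v' i ≤ 1)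
    (hvv' : ∀ i, v i ≤ v' i)
    (Sstar : Finset (Fin N)) (hScard : Sstar.card ≤ K) :
    ∃ S : Finset (Fin N), S.card ≤ K ∧ U (mnlCDF Sstar r v) ≤ U (mnlCDF S r v') :=
  exists_le_mnlCDF_of_le hDF hU hScard hv hv' hvv'

/-- **Lemma (Monotone Maximum).**
If `U` is quasiconvex on a convex set `D` containing all the MNL CDFs, `v' ≥ v`
coordinatewise, and `S*` is a minimum-cardinality optimal assortment for `v` under the
cardinality constraint `K`, then the optimal value for `v'` is at least `U(F(S*,v))`. -/
theorem monotone_maximum (N K : ℕ) (hN : 1 ≤ N) (hK1 : 1 ≤ K) (hKN : K ≤ N)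
    (r : Fin N → ℝ) (hr : ∀ i, 0 < r i ∧ r i ≤ 1)
    (Dset : Set (ℝ → ℝ)) (hDconv : Convex ℝ Dset)
    (hDF : ∀ S : Finset (Fin N), S.card ≤ K → ∀ u : Fin N → ℝ,
      (∀ i, 0 ≤ u i ∧ u i ≤ 1) → mnlCDF S r u ∈ Dset)
    (U : (ℝ → ℝ) → ℝ)
    (hU : ∀ F G : ℝ → ℝ, F ∈ Dset → G ∈ Dset → ∀ l : ℝ, 0 ≤ l → l ≤ 1 →
      U (l • F + (1 - l) • G) ≤ max (U F) (U G))
    (v v' : Fin N → ℝ) (hv : ∀ i, 0 ≤ v i ∧ v i ≤ 1) (hv' : ∀ i, 0 ≤ v' i ∧ v' i ≤ 1)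
    (hvv' : ∀ i, v i ≤ v' i)
    (Sstar : Finset (Fin N)) (hScard : Sstar.card ≤ K)
    (hSmax : ∀ S : Finset (Fin N), S.card ≤ K → U (mnlCDF S r v) ≤ U (mnlCDF Sstar r v))
    (hSmin : ∀ S : Finset (Fin N), S.card ≤ K →
      (∀ S' : Finset (Fin N), S'.card ≤ K → U (mnlCDF S' r v) ≤ U (mnlCDF S r v)) →
      Sstar.card ≤ S.card) :
    ∃ S : Finset (Fin N), S.card ≤ K ∧ U (mnlCDF Sstar r v) ≤ U (mnlCDF S r v') :=
  monotone_maximum_general N K r Dset hDF U hU v v' hv hv' hvv' Sstar hScard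
end

section
/- Let N ≥ 1 and 1 ≤ K ≤ N, with profits r_i ∈ (0,1] for i ∈ [N]. Let D be a convex set of functions ℝ → ℝ containing the CDF F(S,u) for every S ⊆ [N] with |S| ≤ K and every u ∈ [0,1]^N, and let U be a functional that is quasiconvex on D and satisfies the one-sided Lipschitz condition: there is γ̃₂ > 0 such that for all S ⊆ [N] with |S| ≤ K and all u, u' ∈ [0,1]^N with u'_i ≥ u_i for all i, U(F(S,u')) − U(F(S,u)) ≤ (γ̃₂ / (1 + Σ_{i∈S} u'_i)) · Σ_{i∈S}(u'_i − u_i). Let v, v' ∈ [0,1]^N be arbitrary, and let S* be an assortment of minimum cardinality among all S ⊆ [N] with |S| ≤ K maximizing U(F(S,v)). Then U(F(S*,v)) − U(F(S*,v')) ≤ (γ̃₂ / (1 + Σ_{i∈S*} max{v_i, v'_i})) · Σ_{i∈S*} |v'_i − v_i|. -/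
open Finset

section MNL

variable {ι : Type*} {S : Finset ι} {r u v w : ι → ℝ}

lemma one_add_sum_pos (hu : ∀ i ∈ S, 0 ≤ u i) : 0 < 1 + ∑ i ∈ S, u i := by
  linarith [sum_nonneg hu]

lemma mnlCDF_of_neg {x : ℝ} (hx : x < 0) : mnlCDF S r u x = 0 := if_pos hx

lemma mul_mnlCDF_of_nonneg {x : ℝ} (hx : 0 ≤ x) (hu : 1 + ∑ i ∈ S, u i ≠ 0) :
    (1 + ∑ i ∈ S, u i) * mnlCDF S r u x = 1 + ∑ i ∈ S with r i ≤ x, u i := by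
  rw [mnlCDF, if_neg hx.not_gt, mul_div_cancel₀ _ hu]

variable [DecidableEq ι]

lemma mnlCDF_erase_of_eq_zero {i : ι} (hi : u i = 0) :
    mnlCDF (S.erase i) r u = mnlCDF S r u := by
  funext x
  simp only [mnlCDF, filter_erase, sum_erase _ hi]

lemma sum_filter_erase (P : ι → Prop) [DecidablePred P] {i : ι} (hi : i ∈ S) :
    ∑ j ∈ S.erase i with P j, u j = ∑ j ∈ S with P j, u j - if P i then u i else 0 := by
  rw [filter_erase]
  split_ifs with h
  · exact sum_erase_eq_sub (mem_filter.2 ⟨hi, h⟩)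
  · rw [erase_eq_of_notMem fun h' => h (mem_filter.1 h').2, sub_zero]

/-- With `P = (r · ≤ x)` both sides are numerators of MNL CDFs; with `P = True`, normalizers. -/
lemma one_add_sum_mix (P : ι → Prop) [DecidablePred P] (hv : ∀ i ∈ S, v i ≠ 0) :
    (1 + ∑ i ∈ S, (w i - v i) / v i) * (1 + ∑ i ∈ S with P i, v i) =
      (1 + ∑ i ∈ S with P i, w i) +
        ∑ i ∈ S, (w i - v i) / v i * (1 + ∑ j ∈ S.erase i with P j, v j) := by
  have hcancel : ∑ i ∈ S, (w i - v i) / v i * (if P i then v i else 0) =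
      ∑ i ∈ S with P i, (w i - v i) := by
    rw [sum_filter]
    refine sum_congr rfl fun i hi => ?_
    split_ifs
    · field_simp [hv i hi]
    · rw [mul_zero]
  have hsum : ∑ i ∈ S, (w i - v i) / v i * (1 + ∑ j ∈ S.erase i with P j, v j) =
      (∑ i ∈ S, (w i - v i) / v i) * (1 + ∑ i ∈ S with P i, v i) -
        ∑ i ∈ S with P i, (w i - v i) := by
    rw [← hcancel, sum_mul, ← sum_sub_distrib]
    refine sum_congr rfl fun i hi => ?_
    rw [sum_filter_erase P hi]
    ring
  rw [hsum, sum_sub_distrib]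
  ring

theorem Convex.mnlCDF_mem_of_le {C : Set (ℝ → ℝ)} (hC : Convex ℝ C) (hv : ∀ i ∈ S, 0 < v i)
    (hvw : ∀ i ∈ S, v i ≤ w i) (hw : mnlCDF S r w ∈ C)
    (herase : ∀ i ∈ S, mnlCDF (S.erase i) r v ∈ C) : mnlCDF S r v ∈ C := by
  set t : ι → ℝ := fun i => (w i - v i) / v i
  have hv' : ∀ i ∈ S, v i ≠ 0 := fun i hi => (hv i hi).ne'
  have hDv : ∀ T ⊆ S, 0 < 1 + ∑ j ∈ T, v j := fun T hT =>
    one_add_sum_pos fun j hj => (hv j (hT hj)).le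
  have hDw : 0 < 1 + ∑ i ∈ S, w i := one_add_sum_pos fun i hi => (hv i hi).le.trans (hvw i hi)
  have ht : ∀ i ∈ S, 0 ≤ t i := fun i hi => div_nonneg (sub_nonneg.2 (hvw i hi)) (hv i hi).le
  have hσ : 0 < 1 + ∑ i ∈ S, t i := one_add_sum_pos ht
  let c : Option ι → ℝ := fun o =>
    o.elim (1 + ∑ i ∈ S, w i) fun i => t i * (1 + ∑ j ∈ S.erase i, v j)
  let F : Option ι → ℝ → ℝ := fun o => o.elim (mnlCDF S r w) fun i => mnlCDF (S.erase i) r v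
  have hc : ∀ o ∈ insertNone S, 0 ≤ c o := by
    rintro (_ | i) hi
    · exact hDw.le
    · have hi := some_mem_insertNone.1 hi
      exact mul_nonneg (ht i hi) (hDv _ (erase_subset _ _)).le
  have hsum : ∑ o ∈ insertNone S, c o = (1 + ∑ i ∈ S, t i) * (1 + ∑ i ∈ S, v i) := by
    simpa [c, t, sum_insertNone] using (one_add_sum_mix (fun _ => True) hv').symm
  have hmix : mnlCDF S r v = (insertNone S).centerMass c F := by
    funext x
    rw [centerMass, hsum, sum_insertNone]
    simp only [Pi.smul_apply, Pi.add_apply, Finset.sum_apply, smul_eq_mul, c, F, Option.elim]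
    rcases lt_or_ge x 0 with hx | hx
    · simp [mnlCDF_of_neg hx]
    rw [eq_inv_mul_iff_mul_eq₀ (mul_pos hσ (hDv S subset_rfl)).ne', mul_assoc,
      mul_mnlCDF_of_nonneg hx (hDv S subset_rfl).ne',
      mul_mnlCDF_of_nonneg hx hDw.ne', one_add_sum_mix _ hv']
    refine congrArg _ (sum_congr rfl fun i hi => ?_)
    rw [mul_assoc, mul_mnlCDF_of_nonneg hx (hDv _ (erase_subset _ _)).ne']
  rw [hmix]
  refine hC.centerMass_mem hc (hsum ▸ mul_pos hσ (hDv S subset_rfl)) ?_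
  rintro (_ | i) hi
  exacts [hw, herase i (some_mem_insertNone.1 hi)]

theorem QuasiconvexOn.le_mnlCDF_of_le {C : Set (ℝ → ℝ)} {U : (ℝ → ℝ) → ℝ}
    (hU : QuasiconvexOn ℝ C U) (hv : ∀ i ∈ S, 0 < v i) (hvw : ∀ i ∈ S, v i ≤ w i)
    (hw : mnlCDF S r w ∈ C) (herase : ∀ i ∈ S, mnlCDF (S.erase i) r v ∈ C)
    (hlt : ∀ i ∈ S, U (mnlCDF (S.erase i) r v) < U (mnlCDF S r v)) :
    U (mnlCDF S r v) ≤ U (mnlCDF S r w) := by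
  by_contra! h
  exact (lt_irrefl _ ((hU.convex_lt _).mnlCDF_mem_of_le hv hvw ⟨hw, h⟩
    fun i hi => ⟨herase i hi, hlt i hi⟩).2)

end MNL

lemma lt_of_card_lt_of_minCard_argmax {α β : Type*} [LinearOrder β] {f : Finset α → β} {K : ℕ}
    {S T : Finset α} (hS : S.card ≤ K) (hmax : ∀ S' : Finset α, S'.card ≤ K → f S' ≤ f S)
    (hmin : ∀ S' : Finset α, S'.card ≤ K → (∀ S'' : Finset α, S''.card ≤ K → f S'' ≤ f S') →
      S.card ≤ S'.card)
    (hT : T.card < S.card) : f T < f S := by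
  have hTK : T.card ≤ K := hT.le.trans hS
  refine (hmax T hTK).lt_of_ne fun h => hT.not_ge (hmin T hTK ?_)
  rwa [h]

theorem lipschitz_at_optimal_general (N K : ℕ)
    (r : Fin N → ℝ)
    (Dset : Set (ℝ → ℝ)) (hDconv : Convex ℝ Dset)
    (hDF : ∀ S : Finset (Fin N), S.card ≤ K → ∀ u : Fin N → ℝ,
      (∀ i, 0 ≤ u i ∧ u i ≤ 1) → mnlCDF S r u ∈ Dset)
    (U : (ℝ → ℝ) → ℝ)
    (hU : ∀ F G : ℝ → ℝ, F ∈ Dset → G ∈ Dset → ∀ l : ℝ, 0 ≤ l → l ≤ 1 →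
      U (l • F + (1 - l) • G) ≤ max (U F) (U G))
    (γ : ℝ) (hγ : 0 < γ)
    (hLip : ∀ S : Finset (Fin N), S.card ≤ K → ∀ u u' : Fin N → ℝ,
      (∀ i, 0 ≤ u i ∧ u i ≤ 1) → (∀ i, 0 ≤ u' i ∧ u' i ≤ 1) → (∀ i, u i ≤ u' i) →
      U (mnlCDF S r u') - U (mnlCDF S r u) ≤
        (γ / (1 + ∑ i ∈ S, u' i)) * ∑ i ∈ S, (u' i - u i))
    (v v' : Fin N → ℝ) (hv : ∀ i, 0 ≤ v i ∧ v i ≤ 1) (hv' : ∀ i, 0 ≤ v' i ∧ v' i ≤ 1)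
    (Sstar : Finset (Fin N)) (hScard : Sstar.card ≤ K)
    (hSmax : ∀ S : Finset (Fin N), S.card ≤ K → U (mnlCDF S r v) ≤ U (mnlCDF Sstar r v))
    (hSmin : ∀ S : Finset (Fin N), S.card ≤ K →
      (∀ S' : Finset (Fin N), S'.card ≤ K → U (mnlCDF S' r v) ≤ U (mnlCDF S r v)) →
      Sstar.card ≤ S.card) :
    U (mnlCDF Sstar r v) - U (mnlCDF Sstar r v') ≤
      (γ / (1 + ∑ i ∈ Sstar, max (v i) (v' i))) * ∑ i ∈ Sstar, |v' i - v i| := by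
  have hq : QuasiconvexOn ℝ Dset U := quasiconvexOn_iff_le_max.2 ⟨hDconv,
    fun F hF G hG a b ha hb hab => by
      obtain rfl := eq_sub_of_add_eq' hab
      exact hU F G hF hG a ha (by linarith)⟩
  have hlt : ∀ i ∈ Sstar, U (mnlCDF (Sstar.erase i) r v) < U (mnlCDF Sstar r v) :=
    fun i hi => lt_of_card_lt_of_minCard_argmax (f := fun S => U (mnlCDF S r v))
      hScard hSmax hSmin (card_erase_lt_of_mem hi)
  have hpos : ∀ i ∈ Sstar, 0 < v i := fun i hi => (hv i).1.lt_of_ne fun h =>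
    (hlt i hi).ne (congrArg U (mnlCDF_erase_of_eq_zero h.symm))
  set w : Fin N → ℝ := fun i => max (v i) (v' i)
  have hw : ∀ i, 0 ≤ w i ∧ w i ≤ 1 := fun i =>
    ⟨(hv i).1.trans (le_max_left _ _), max_le (hv i).2 (hv' i).2⟩
  have hmono : U (mnlCDF Sstar r v) ≤ U (mnlCDF Sstar r w) :=
    hq.le_mnlCDF_of_le hpos (fun i _ => le_max_left _ _) (hDF Sstar hScard w hw)
      (fun i _ => hDF _ (card_erase_le.trans hScard) v hv) hlt
  have hdiff : ∑ i ∈ Sstar, (w i - v' i) ≤ ∑ i ∈ Sstar, |v' i - v i| :=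
    sum_le_sum fun i _ => sub_le_iff_le_add.2 (max_le
      (by linarith [neg_abs_le (v' i - v i)]) (by linarith [abs_nonneg (v' i - v i)]))
  calc U (mnlCDF Sstar r v) - U (mnlCDF Sstar r v')
      ≤ U (mnlCDF Sstar r w) - U (mnlCDF Sstar r v') := by linarith
    _ ≤ γ / (1 + ∑ i ∈ Sstar, w i) * ∑ i ∈ Sstar, (w i - v' i) :=
        hLip Sstar hScard v' w hv' hw fun i => le_max_right _ _
    _ ≤ γ / (1 + ∑ i ∈ Sstar, w i) * ∑ i ∈ Sstar, |v' i - v i| :=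
        mul_le_mul_of_nonneg_left hdiff
          (div_nonneg hγ.le (one_add_sum_pos fun i _ => (hw i).1).le)

/-- **Proposition (two-sided Lipschitz bound at the optimal assortment).**
If `U` is quasiconvex on a convex set `D` containing all the MNL CDFs and satisfies the
one-sided Lipschitz condition with constant `γ̃₂`, and `S*` is a minimum-cardinality optimal
assortment for `v` under the cardinality constraint `K`, then for any `v'`:
`U(F(S*,v)) − U(F(S*,v')) ≤ (γ̃₂/(1+∑_{i∈S*} max{v i, v' i})) ∑_{i∈S*} |v' i − v i|`. -/
theorem lipschitz_at_optimal (N K : ℕ) (hN : 1 ≤ N) (hK1 : 1 ≤ K) (hKN : K ≤ N)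
    (r : Fin N → ℝ) (hr : ∀ i, 0 < r i ∧ r i ≤ 1)
    (Dset : Set (ℝ → ℝ)) (hDconv : Convex ℝ Dset)
    (hDF : ∀ S : Finset (Fin N), S.card ≤ K → ∀ u : Fin N → ℝ,
      (∀ i, 0 ≤ u i ∧ u i ≤ 1) → mnlCDF S r u ∈ Dset)
    (U : (ℝ → ℝ) → ℝ)
    (hU : ∀ F G : ℝ → ℝ, F ∈ Dset → G ∈ Dset → ∀ l : ℝ, 0 ≤ l → l ≤ 1 →
      U (l • F + (1 - l) • G) ≤ max (U F) (U G))
    (γ : ℝ) (hγ : 0 < γ)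
    (hLip : ∀ S : Finset (Fin N), S.card ≤ K → ∀ u u' : Fin N → ℝ,
      (∀ i, 0 ≤ u i ∧ u i ≤ 1) → (∀ i, 0 ≤ u' i ∧ u' i ≤ 1) → (∀ i, u i ≤ u' i) →
      U (mnlCDF S r u') - U (mnlCDF S r u) ≤
        (γ / (1 + ∑ i ∈ S, u' i)) * ∑ i ∈ S, (u' i - u i))
    (v v' : Fin N → ℝ) (hv : ∀ i, 0 ≤ v i ∧ v i ≤ 1) (hv' : ∀ i, 0 ≤ v' i ∧ v' i ≤ 1)
    (Sstar : Finset (Fin N)) (hScard : Sstar.card ≤ K)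
    (hSmax : ∀ S : Finset (Fin N), S.card ≤ K → U (mnlCDF S r v) ≤ U (mnlCDF Sstar r v))
    (hSmin : ∀ S : Finset (Fin N), S.card ≤ K →
      (∀ S' : Finset (Fin N), S'.card ≤ K → U (mnlCDF S' r v) ≤ U (mnlCDF S r v)) →
      Sstar.card ≤ S.card) :
    U (mnlCDF Sstar r v) - U (mnlCDF Sstar r v') ≤
      (γ / (1 + ∑ i ∈ Sstar, max (v i) (v' i))) * ∑ i ∈ Sstar, |v' i - v i| :=
  lipschitz_at_optimal_general N K r Dset hDconv hDF U hU γ hγ hLip v v' hv hv' Sstar hScard hSmax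
    hSmin
end

section
/- Let n ≥ 1 be a natural number and define the n-th moment of the MNL distribution by U^n(v) = Σ_{i∈S} r_i^n · v_i / D(v). Then (a) 0 ≤ U^n(v) ≤ 1 for every v ∈ [0,1]^S; (b) for all v ≤ v' in [0,1]^S, U^n(v') − U^n(v) ≤ (1/D(v)) · Σ_{i∈S}(v'_i − v_i); and (c) for all v ≤ v' in [0,1]^S, |U^n(v') − U^n(v)| ≤ (2/D(v)) · Σ_{i∈S}(v'_i − v_i). -/
/-- `D(v) = 1 + ∑_{i∈S} v i`, the MNL normalization constant. -/
noncomputable def mnlD {ι : Type*} (S : Finset ι) (v : ι → ℝ) : ℝ := 1 + ∑ i ∈ S, v i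

/-- The `n`-th moment of the MNL purchase-profit distribution:
`U^n(v) = ∑_{i∈S} r i ^ n * v i / D(v)`. -/
noncomputable def mnlMoment {ι : Type*} (S : Finset ι) (r : ι → ℝ) (n : ℕ) (v : ι → ℝ) : ℝ :=
  (∑ i ∈ S, r i ^ n * v i) / mnlD S v

/-- **Proposition (`n`-th moment: boundedness and one-sided Lipschitz condition).** -/
theorem nth_moment_bounded_and_lipschitz {ι : Type*} (S : Finset ι) (r : ι → ℝ)
    (hr : ∀ i ∈ S, 0 < r i ∧ r i ≤ 1) (n : ℕ) (hn : 1 ≤ n) :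
    (∀ v : ι → ℝ, (∀ i ∈ S, 0 ≤ v i ∧ v i ≤ 1) →
      0 ≤ mnlMoment S r n v ∧ mnlMoment S r n v ≤ 1) ∧
    (∀ v v' : ι → ℝ, (∀ i ∈ S, 0 ≤ v i ∧ v i ≤ 1) → (∀ i ∈ S, 0 ≤ v' i ∧ v' i ≤ 1) →
      (∀ i ∈ S, v i ≤ v' i) →
      mnlMoment S r n v' - mnlMoment S r n v ≤ (1 / mnlD S v) * ∑ i ∈ S, (v' i - v i)) ∧
    (∀ v v' : ι → ℝ, (∀ i ∈ S, 0 ≤ v i ∧ v i ≤ 1) → (∀ i ∈ S, 0 ≤ v' i ∧ v' i ≤ 1) →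
      (∀ i ∈ S, v i ≤ v' i) →
      |mnlMoment S r n v' - mnlMoment S r n v| ≤ (2 / mnlD S v) * ∑ i ∈ S, (v' i - v i)) := by
  -- basic facts
  have hA0 : ∀ v : ι → ℝ, (∀ i ∈ S, 0 ≤ v i ∧ v i ≤ 1) → 0 ≤ ∑ i ∈ S, r i ^ n * v i := by
    intro v hv
    exact Finset.sum_nonneg fun i hi =>
      mul_nonneg (pow_nonneg (hr i hi).1.le n) (hv i hi).1
  have hAle : ∀ v : ι → ℝ, (∀ i ∈ S, 0 ≤ v i ∧ v i ≤ 1) →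
      (∑ i ∈ S, r i ^ n * v i) ≤ ∑ i ∈ S, v i := by
    intro v hv
    refine Finset.sum_le_sum fun i hi => ?_
    have h1 : r i ^ n ≤ 1 := pow_le_one₀ (hr i hi).1.le (hr i hi).2
    nlinarith [(hv i hi).1]
  have hD : ∀ v : ι → ℝ, (∀ i ∈ S, 0 ≤ v i ∧ v i ≤ 1) → (1 : ℝ) ≤ mnlD S v := by
    intro v hv
    have : 0 ≤ ∑ i ∈ S, v i := Finset.sum_nonneg fun i hi => (hv i hi).1
    simp only [mnlD]; linarith
  -- key one-sided estimates
  have key : ∀ v v' : ι → ℝ, (∀ i ∈ S, 0 ≤ v i ∧ v i ≤ 1) → (∀ i ∈ S, 0 ≤ v' i ∧ v' i ≤ 1) →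
      (∀ i ∈ S, v i ≤ v' i) →
      mnlMoment S r n v' - mnlMoment S r n v ≤ (1 / mnlD S v) * ∑ i ∈ S, (v' i - v i) ∧
      mnlMoment S r n v - mnlMoment S r n v' ≤ (1 / mnlD S v) * ∑ i ∈ S, (v' i - v i) := by
    intro v v' hv hv' hle
    set A := ∑ i ∈ S, r i ^ n * v i with hA
    set A' := ∑ i ∈ S, r i ^ n * v' i with hA'
    set d := mnlD S v with hd
    set d' := mnlD S v' with hd'
    set δ := ∑ i ∈ S, (v' i - v i) with hδ
    have hδ0 : 0 ≤ δ := Finset.sum_nonneg fun i hi => sub_nonneg.2 (hle i hi)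
    have hdpos : (0:ℝ) < d := lt_of_lt_of_le one_pos (hD v hv)
    have hdd' : d' = d + δ := by
      simp only [hd, hd', hδ, mnlD, Finset.sum_sub_distrib]; ring
    have hd'pos : (0:ℝ) < d' := by rw [hdd']; linarith
    have hAA' : A ≤ A' := Finset.sum_le_sum fun i hi =>
      mul_le_mul_of_nonneg_left (hle i hi) (pow_nonneg (hr i hi).1.le n)
    have hA'le : A' ≤ A + δ := by
      have : A' - A ≤ δ := by
        rw [hA', hA, ← Finset.sum_sub_distrib, hδ]
        refine Finset.sum_le_sum fun i hi => ?_
        have h1 : r i ^ n ≤ 1 := pow_le_one₀ (hr i hi).1.le (hr i hi).2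
        have h2 : 0 ≤ v' i - v i := sub_nonneg.2 (hle i hi)
        have h3 : 0 ≤ r i ^ n := pow_nonneg (hr i hi).1.le n
        nlinarith
      linarith
    have hAd : A ≤ d := by
      have := hAle v hv
      have h0 : ∑ i ∈ S, v i ≤ d := by simp only [hd, mnlD]; linarith
      linarith
    have hA0' : 0 ≤ A := hA0 v hv
    constructor
    · -- A'/d' - A/d ≤ δ/d
      have h1 : A' / d' ≤ (A + δ) / d := by
        refine div_le_div₀ (by linarith) hA'le hdpos (by rw [hdd']; linarith)
      have : mnlMoment S r n v' = A' / d' := rfl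
      have h2 : mnlMoment S r n v = A / d := rfl
      rw [this, h2, one_div, inv_mul_eq_div]
      have : (A + δ) / d = A / d + δ / d := add_div _ _ _
      linarith
    · -- A/d - A'/d' ≤ δ/d
      have h1 : A / d - A' / d' ≤ δ / d := by
        rw [div_sub_div _ _ hdpos.ne' hd'pos.ne', div_le_div_iff₀ (by positivity) hdpos]
        have hAd' : A ≤ d' := by rw [hdd']; linarith
        have hid : δ * (d * d') - (A * d' - d * A') * d
            = d * δ * (d' - A) + d * d * (A' - A) := by rw [hdd']; ring
        linarith [mul_nonneg (mul_nonneg hdpos.le hδ0) (sub_nonneg.2 hAd'),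
          mul_nonneg (mul_nonneg hdpos.le hdpos.le) (sub_nonneg.2 hAA')]
      have e1 : mnlMoment S r n v' = A' / d' := rfl
      have e2 : mnlMoment S r n v = A / d := rfl
      rw [e1, e2, one_div, inv_mul_eq_div]
      linarith
  refine ⟨?_, fun v v' hv hv' hle => (key v v' hv hv' hle).1, ?_⟩
  · intro v hv
    have hdpos : (0:ℝ) < mnlD S v := lt_of_lt_of_le one_pos (hD v hv)
    constructor
    · exact div_nonneg (hA0 v hv) hdpos.le
    · rw [mnlMoment, div_le_one hdpos]
      have := hAle v hv
      have : (∑ i ∈ S, v i) ≤ mnlD S v := by simp only [mnlD]; linarith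
      linarith [hAle v hv]
  · intro v v' hv hv' hle
    obtain ⟨h1, h2⟩ := key v v' hv hv' hle
    have hδ0 : 0 ≤ ∑ i ∈ S, (v' i - v i) :=
      Finset.sum_nonneg fun i hi => sub_nonneg.2 (hle i hi)
    have hdpos : (0:ℝ) < mnlD S v := lt_of_lt_of_le one_pos (hD v hv)
    have hnn : 0 ≤ (1 / mnlD S v) * ∑ i ∈ S, (v' i - v i) := by positivity
    have h3 : 2 / mnlD S v * ∑ i ∈ S, (v' i - v i)
        = 2 * (1 / mnlD S v * ∑ i ∈ S, (v' i - v i)) := by ring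
    rw [abs_le]
    constructor <;> linarith
end

section
/- Fix a minimum average reward τ ∈ [0,1] and a regularization factor ε > 0. Define the mean U¹(v) = Σ_{i∈S} r_i v_i / D(v), the second moment U²(v) = Σ_{i∈S} r_i² v_i / D(v), the variance σ²(v) = U²(v) − (U¹(v))², and the Sharpe ratio Sh(v) = (U¹(v) − τ)/√(ε + σ²(v)). Then (a) |Sh(v)| ≤ 1/√ε for every v ∈ [0,1]^S; and (b) for all v ≤ v' in [0,1]^S, |Sh(v') − Sh(v)| ≤ ((2ε^{−1/2} + 3ε^{−3/2})/D(v)) · Σ_{i∈S}(v'_i − v_i). -/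
/-- The mean of the MNL purchase-profit distribution. -/
noncomputable def mnlMean {ι : Type*} (S : Finset ι) (r : ι → ℝ) (v : ι → ℝ) : ℝ :=
  (∑ i ∈ S, r i * v i) / mnlD S v

/-- The second moment of the MNL purchase-profit distribution. -/
noncomputable def mnlSecondMoment {ι : Type*} (S : Finset ι) (r : ι → ℝ) (v : ι → ℝ) : ℝ :=
  (∑ i ∈ S, r i ^ 2 * v i) / mnlD S v

/-- The variance of the MNL purchase-profit distribution. -/
noncomputable def mnlVar {ι : Type*} (S : Finset ι) (r : ι → ℝ) (v : ι → ℝ) : ℝ :=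
  mnlSecondMoment S r v - (mnlMean S r v) ^ 2

/-- The Sharpe ratio of the MNL purchase-profit distribution with minimum average reward `τ`
and regularization factor `ε`. -/
noncomputable def mnlSharpe {ι : Type*} (S : Finset ι) (r : ι → ℝ) (τ ε : ℝ) (v : ι → ℝ) : ℝ :=
  (mnlMean S r v - τ) / Real.sqrt (ε + mnlVar S r v)

section Aux

variable {ι : Type*} {S : Finset ι}

lemma mnl_D_ge_one {v : ι → ℝ} (hv : ∀ i ∈ S, 0 ≤ v i) : 1 ≤ mnlD S v := by
  have : (0:ℝ) ≤ ∑ i ∈ S, v i := Finset.sum_nonneg hv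
  simp only [mnlD]; linarith

lemma mnl_D_pos {v : ι → ℝ} (hv : ∀ i ∈ S, 0 ≤ v i) : 0 < mnlD S v :=
  lt_of_lt_of_le one_pos (mnl_D_ge_one hv)

lemma mnl_sum_le_D {a v : ι → ℝ} (ha : ∀ i ∈ S, 0 ≤ a i ∧ a i ≤ 1)
    (hv : ∀ i ∈ S, 0 ≤ v i) : ∑ i ∈ S, a i * v i ≤ mnlD S v := by
  have h1 : ∑ i ∈ S, a i * v i ≤ ∑ i ∈ S, v i := by
    apply Finset.sum_le_sum
    intro i hi
    nlinarith [(ha i hi).1, (ha i hi).2, hv i hi]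
  simp only [mnlD]; linarith

lemma mnl_sum_nonneg {a v : ι → ℝ} (ha : ∀ i ∈ S, 0 ≤ a i ∧ a i ≤ 1)
    (hv : ∀ i ∈ S, 0 ≤ v i) : 0 ≤ ∑ i ∈ S, a i * v i :=
  Finset.sum_nonneg fun i hi => mul_nonneg (ha i hi).1 (hv i hi)

lemma mnl_frac_mem {a v : ι → ℝ} (ha : ∀ i ∈ S, 0 ≤ a i ∧ a i ≤ 1)
    (hv : ∀ i ∈ S, 0 ≤ v i) :
    0 ≤ (∑ i ∈ S, a i * v i) / mnlD S v ∧ (∑ i ∈ S, a i * v i) / mnlD S v ≤ 1 :=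
  ⟨div_nonneg (mnl_sum_nonneg ha hv) (mnl_D_pos hv).le,
   (div_le_one (mnl_D_pos hv)).mpr (mnl_sum_le_D ha hv)⟩

lemma mnl_frac_lipschitz {a v v' : ι → ℝ} (ha : ∀ i ∈ S, 0 ≤ a i ∧ a i ≤ 1)
    (hv : ∀ i ∈ S, 0 ≤ v i) (hv' : ∀ i ∈ S, 0 ≤ v' i) (hle : ∀ i ∈ S, v i ≤ v' i) :
    |(∑ i ∈ S, a i * v' i) / mnlD S v' - (∑ i ∈ S, a i * v i) / mnlD S v|
      ≤ 2 * (∑ i ∈ S, (v' i - v i)) / mnlD S v := by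
  set D := mnlD S v with hDdef
  set D' := mnlD S v' with hD'def
  set A := ∑ i ∈ S, a i * v i with hAdef
  set A' := ∑ i ∈ S, a i * v' i with hA'def
  set δ := ∑ i ∈ S, (v' i - v i) with hδdef
  have hD : 0 < D := mnl_D_pos hv
  have hD' : 0 < D' := mnl_D_pos hv'
  have hδ0 : 0 ≤ δ := Finset.sum_nonneg fun i hi => sub_nonneg.2 (hle i hi)
  have hδ : D' = D + δ := by
    simp only [hDdef, hD'def, hδdef, mnlD, Finset.sum_sub_distrib]; ring
  have hDD' : D ≤ D' := by linarith
  have hAA'0 : 0 ≤ A' - A := by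
    rw [hAdef, hA'def, ← Finset.sum_sub_distrib]
    exact Finset.sum_nonneg fun i hi =>
      sub_nonneg.2 (mul_le_mul_of_nonneg_left (hle i hi) (ha i hi).1)
  have hAA'δ : A' - A ≤ δ := by
    rw [hAdef, hA'def, ← Finset.sum_sub_distrib, hδdef]
    apply Finset.sum_le_sum
    intro i hi
    have h1 := (ha i hi).1
    have h2 := (ha i hi).2
    have h3 := hle i hi
    nlinarith
  have hA0 : 0 ≤ A := mnl_sum_nonneg ha hv
  have hAD : A ≤ D := mnl_sum_le_D ha hv
  have key : A'/D' - A/D = (A' - A)/D' - A * δ/(D*D') := by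
    rw [hδ]; field_simp; ring
  rw [key]
  have e1 : (A'-A)/D' ≤ δ / D := div_le_div₀ hδ0 hAA'δ hD hDD'
  have e10 : 0 ≤ (A'-A)/D' := div_nonneg hAA'0 hD'.le
  have e2 : A*δ/(D*D') ≤ δ / D := by
    rw [div_le_div_iff₀ (by positivity) hD]
    have hAD' : A ≤ D' := hAD.trans hDD'
    nlinarith [mul_nonneg hδ0 hD.le]
  have e20 : 0 ≤ A*δ/(D*D') := by positivity
  have hδD : 0 ≤ δ / D := div_nonneg hδ0 hD.le
  rw [abs_le]
  constructor
  · have : 2 * δ / D = 2 * (δ / D) := by ring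
    rw [this]; linarith
  · have : 2 * δ / D = 2 * (δ / D) := by ring
    rw [this]; linarith

lemma mnl_var_nonneg {r v : ι → ℝ} (hr : ∀ i ∈ S, 0 < r i ∧ r i ≤ 1)
    (hv : ∀ i ∈ S, 0 ≤ v i) : 0 ≤ mnlVar S r v := by
  have hD : 0 < mnlD S v := mnl_D_pos hv
  have hCS := Finset.sum_mul_sq_le_sq_mul_sq S (fun i => r i * Real.sqrt (v i))
    (fun i => Real.sqrt (v i))
  have h1 : ∑ i ∈ S, (r i * Real.sqrt (v i)) * Real.sqrt (v i) = ∑ i ∈ S, r i * v i :=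
    Finset.sum_congr rfl fun i hi => by rw [mul_assoc, Real.mul_self_sqrt (hv i hi)]
  have h2 : ∑ i ∈ S, (r i * Real.sqrt (v i))^2 = ∑ i ∈ S, r i ^ 2 * v i :=
    Finset.sum_congr rfl fun i hi => by rw [mul_pow, Real.sq_sqrt (hv i hi)]
  have h3 : ∑ i ∈ S, (Real.sqrt (v i))^2 = ∑ i ∈ S, v i :=
    Finset.sum_congr rfl fun i hi => Real.sq_sqrt (hv i hi)
  simp only [h1, h2, h3] at hCS
  have hr2 : 0 ≤ ∑ i ∈ S, r i ^ 2 * v i :=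
    Finset.sum_nonneg fun i hi => mul_nonneg (sq_nonneg _) (hv i hi)
  have hsum : ∑ i ∈ S, v i = mnlD S v - 1 := by simp [mnlD]
  rw [hsum] at hCS
  unfold mnlVar mnlMean mnlSecondMoment
  rw [sub_nonneg, div_pow, div_le_div_iff₀ (pow_pos hD 2) hD]
  nlinarith

lemma mnl_mean_mem {r v : ι → ℝ} (hr : ∀ i ∈ S, 0 < r i ∧ r i ≤ 1)
    (hv : ∀ i ∈ S, 0 ≤ v i) : 0 ≤ mnlMean S r v ∧ mnlMean S r v ≤ 1 :=
  mnl_frac_mem (fun i hi => ⟨(hr i hi).1.le, (hr i hi).2⟩) hv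

lemma mnl_r_sq_mem {r : ι → ℝ} (hr : ∀ i ∈ S, 0 < r i ∧ r i ≤ 1) :
    ∀ i ∈ S, 0 ≤ r i ^ 2 ∧ r i ^ 2 ≤ 1 := fun i hi =>
  ⟨sq_nonneg _, by nlinarith [(hr i hi).1, (hr i hi).2]⟩

lemma mnl_var_le_one {r v : ι → ℝ} (hr : ∀ i ∈ S, 0 < r i ∧ r i ≤ 1)
    (hv : ∀ i ∈ S, 0 ≤ v i) : mnlVar S r v ≤ 1 := by
  have h := (mnl_frac_mem (mnl_r_sq_mem hr) hv).2
  unfold mnlVar mnlSecondMoment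
  nlinarith [sq_nonneg (mnlMean S r v)]

lemma sqrt_sub_le {x y c : ℝ} (hc : 0 < c) (hx : c ≤ x) (hy : c ≤ y) :
    |Real.sqrt x - Real.sqrt y| ≤ |x - y| / (2 * Real.sqrt c) := by
  have hc' : 0 < Real.sqrt c := Real.sqrt_pos.2 hc
  have hx0 : 0 ≤ x := hc.le.trans hx
  have hy0 : 0 ≤ y := hc.le.trans hy
  have hsx : Real.sqrt c ≤ Real.sqrt x := Real.sqrt_le_sqrt hx
  have hsy : Real.sqrt c ≤ Real.sqrt y := Real.sqrt_le_sqrt hy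
  have hmul : |Real.sqrt x - Real.sqrt y| * (Real.sqrt x + Real.sqrt y) = |x - y| := by
    rw [← abs_of_nonneg (by positivity : (0:ℝ) ≤ Real.sqrt x + Real.sqrt y), ← abs_mul]
    congr 1
    have hxx : Real.sqrt x * Real.sqrt x = x := Real.mul_self_sqrt hx0
    have hyy : Real.sqrt y * Real.sqrt y = y := Real.mul_self_sqrt hy0
    nlinarith
  rw [le_div_iff₀ (by positivity)]
  nlinarith [abs_nonneg (Real.sqrt x - Real.sqrt y)]

end Aux

/-- **Proposition (Sharpe ratio: boundedness and Lipschitz condition).** -/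
theorem sharpe_bounded_and_lipschitz {ι : Type*} (S : Finset ι) (r : ι → ℝ)
    (hr : ∀ i ∈ S, 0 < r i ∧ r i ≤ 1) (τ ε : ℝ) (hτ0 : 0 ≤ τ) (hτ1 : τ ≤ 1) (hε : 0 < ε) :
    (∀ v : ι → ℝ, (∀ i ∈ S, 0 ≤ v i ∧ v i ≤ 1) →
      |mnlSharpe S r τ ε v| ≤ 1 / Real.sqrt ε) ∧
    (∀ v v' : ι → ℝ, (∀ i ∈ S, 0 ≤ v i ∧ v i ≤ 1) → (∀ i ∈ S, 0 ≤ v' i ∧ v' i ≤ 1) →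
      (∀ i ∈ S, v i ≤ v' i) →
      |mnlSharpe S r τ ε v' - mnlSharpe S r τ ε v| ≤
        ((2 * ε ^ (-(1:ℝ)/2) + 3 * ε ^ (-(3:ℝ)/2)) / mnlD S v) * ∑ i ∈ S, (v' i - v i)) := by
  have hsε : 0 < Real.sqrt ε := Real.sqrt_pos.2 hε
  have hεsq : Real.sqrt ε * Real.sqrt ε = ε := Real.mul_self_sqrt hε.le
  -- a generic bound on |Sh| and lower bound on the denominator
  have hden : ∀ v : ι → ℝ, (∀ i ∈ S, 0 ≤ v i ∧ v i ≤ 1) →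
      Real.sqrt ε ≤ Real.sqrt (ε + mnlVar S r v) := by
    intro v hv
    apply Real.sqrt_le_sqrt
    have := mnl_var_nonneg hr (fun i hi => (hv i hi).1)
    linarith
  have hnum : ∀ v : ι → ℝ, (∀ i ∈ S, 0 ≤ v i ∧ v i ≤ 1) →
      |mnlMean S r v - τ| ≤ 1 := by
    intro v hv
    have := mnl_mean_mem hr (fun i hi => (hv i hi).1)
    rw [abs_le]; constructor <;> linarith [this.1, this.2]
  constructor
  · intro v hv
    rw [mnlSharpe, abs_div, abs_of_nonneg (Real.sqrt_nonneg _)]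
    exact div_le_div₀ (by norm_num) (hnum v hv) hsε (hden v hv)
  · intro v v' hv hv' hle
    have hv0 : ∀ i ∈ S, 0 ≤ v i := fun i hi => (hv i hi).1
    have hv'0 : ∀ i ∈ S, 0 ≤ v' i := fun i hi => (hv' i hi).1
    set D := mnlD S v with hDdef
    set δ := ∑ i ∈ S, (v' i - v i) with hδdef
    have hD : 0 < D := mnl_D_pos hv0
    have hδ0 : 0 ≤ δ := Finset.sum_nonneg fun i hi => sub_nonneg.2 (hle i hi)
    set U := mnlMean S r v with hUdef
    set U' := mnlMean S r v' with hU'def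
    set W := mnlVar S r v with hWdef
    set W' := mnlVar S r v' with hW'def
    set g := Real.sqrt (ε + W) with hgdef
    set g' := Real.sqrt (ε + W') with hg'def
    have hg : Real.sqrt ε ≤ g := hden v hv
    have hg' : Real.sqrt ε ≤ g' := hden v' hv'
    have hgpos : 0 < g := lt_of_lt_of_le hsε hg
    have hg'pos : 0 < g' := lt_of_lt_of_le hsε hg'
    -- Lipschitz bounds on mean, second moment, variance
    have hU1 : |U' - U| ≤ 2 * δ / D :=
      mnl_frac_lipschitz (fun i hi => ⟨(hr i hi).1.le, (hr i hi).2⟩) hv0 hv'0 hle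
    have hU2 : |mnlSecondMoment S r v' - mnlSecondMoment S r v| ≤ 2 * δ / D :=
      mnl_frac_lipschitz (mnl_r_sq_mem hr) hv0 hv'0 hle
    have hUm := mnl_mean_mem hr hv0
    have hUm' := mnl_mean_mem hr hv'0
    have hUsq : |U'^2 - U^2| ≤ 4 * δ / D := by
      have h : U'^2 - U^2 = (U' + U) * (U' - U) := by ring
      rw [h, abs_mul]
      have h1 : |U' + U| ≤ 2 := by
        rw [abs_le]; constructor <;> linarith [hUm.1, hUm.2, hUm'.1, hUm'.2]
      calc |U' + U| * |U' - U| ≤ 2 * (2 * δ / D) :=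
            mul_le_mul h1 hU1 (abs_nonneg _) (by norm_num)
        _ = 4 * δ / D := by ring
    have hW1 : |W' - W| ≤ 6 * δ / D := by
      have h : W' - W = (mnlSecondMoment S r v' - mnlSecondMoment S r v) - (U'^2 - U^2) := by
        rw [hWdef, hW'def, mnlVar, mnlVar, hUdef, hU'def]; ring
      calc |W' - W| ≤ |mnlSecondMoment S r v' - mnlSecondMoment S r v| + |U'^2 - U^2| := by
            rw [h]; exact abs_sub _ _
        _ ≤ 2 * δ / D + 4 * δ / D := add_le_add hU2 hUsq
        _ = 6 * δ / D := by ring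
    -- bound on |g - g'|
    have hW0 : 0 ≤ W := mnl_var_nonneg hr hv0
    have hW'0 : 0 ≤ W' := mnl_var_nonneg hr hv'0
    have hgg' : |g - g'| ≤ (6 * δ / D) / (2 * Real.sqrt ε) := by
      have h := sqrt_sub_le (x := ε + W) (y := ε + W') hε (by linarith) (by linarith)
      rw [hgdef, hg'def]
      refine h.trans ?_
      have he : ε + W - (ε + W') = -(W' - W) := by ring
      rw [he, abs_neg]
      gcongr
    -- algebraic identity for the difference of Sharpe ratios
    have hεgg' : ε ≤ g * g' := by
      calc ε = Real.sqrt ε * Real.sqrt ε := hεsq.symm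
        _ ≤ g * g' := mul_le_mul hg hg' hsε.le hgpos.le
    have hid : mnlSharpe S r τ ε v' - mnlSharpe S r τ ε v
        = (U' - U) / g' + (U - τ) * ((g - g') / (g * g')) := by
      simp only [mnlSharpe]
      rw [← hUdef, ← hU'def, ← hgdef, ← hg'def]
      field_simp
      ring
    have habs : |mnlSharpe S r τ ε v' - mnlSharpe S r τ ε v|
        ≤ |U' - U| / g' + |U - τ| * (|g - g'| / (g * g')) := by
      rw [hid]
      refine (abs_add_le _ _).trans ?_
      rw [abs_div, abs_mul, abs_div, abs_of_pos hg'pos, abs_of_pos (mul_pos hgpos hg'pos)]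
    have t1 : |U' - U| / g' ≤ (2 * δ / D) / Real.sqrt ε :=
      div_le_div₀ (by positivity) hU1 hsε hg'
    have t2 : |U - τ| * (|g - g'| / (g * g'))
        ≤ 1 * (((6 * δ / D) / (2 * Real.sqrt ε)) / ε) := by
      apply mul_le_mul (hnum v hv) ?_ (by positivity) (by norm_num)
      exact div_le_div₀ (by positivity) hgg' hε hεgg'
    -- final arithmetic
    have e1 : ε ^ (-(1:ℝ)/2) = 1 / Real.sqrt ε := by
      rw [Real.sqrt_eq_rpow, show (-(1:ℝ)/2) = -(1/2) by ring, Real.rpow_neg hε.le]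
      exact (one_div _).symm
    have e2 : ε ^ (-(3:ℝ)/2) = 1 / Real.sqrt ε ^ 3 := by
      rw [Real.sqrt_eq_rpow, show (-(3:ℝ)/2) = -(3/2) by ring, Real.rpow_neg hε.le, one_div,
        ← Real.rpow_natCast (ε ^ ((1:ℝ)/2)) 3, ← Real.rpow_mul hε.le]
      norm_num
    have heq : ((2 * ε ^ (-(1:ℝ)/2) + 3 * ε ^ (-(3:ℝ)/2)) / D) * δ
        = (2 * δ / D) / Real.sqrt ε + 1 * (((6 * δ / D) / (2 * Real.sqrt ε)) / ε) := by
      rw [e1, e2]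
      set s := Real.sqrt ε with hsdef
      rw [← hεsq]
      field_simp
      ring
    have hfinal := habs.trans (add_le_add t1 t2)
    linarith
end

section
/- Fix a risk aversion parameter θ > 0 and define the entropy risk of the MNL distribution by U^{ent}(v) = −(1/θ)·ln( (1 + Σ_{i∈S} e^{−θ r_i} v_i) / D(v) ). Then (a) 0 ≤ U^{ent}(v) ≤ 1 for every v ∈ [0,1]^S; and (b) for all v ≤ v' in [0,1]^S, |U^{ent}(v') − U^{ent}(v)| ≤ ((2e^{θ}/θ)/D(v)) · Σ_{i∈S}(v'_i − v_i). -/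
/-- The entropy risk with risk-aversion parameter `θ` of the MNL purchase-profit
distribution: `U^ent(v) = −(1/θ) ln((1 + ∑_{i∈S} e^{−θ r i} v i)/D(v))`. -/
noncomputable def mnlEntropyRisk {ι : Type*} (S : Finset ι) (r : ι → ℝ) (θ : ℝ)
    (v : ι → ℝ) : ℝ :=
  -(1 / θ) * Real.log ((1 + ∑ i ∈ S, Real.exp (-θ * r i) * v i) / mnlD S v)

open Real Finset

lemma Real.log_sub_log_le_div {a b : ℝ} (ha : 0 < a) (hb : 0 < b) :
    log b - log a ≤ (b - a) / a := by
  rw [← log_div hb.ne' ha.ne', sub_div, div_self ha.ne']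
  exact log_le_sub_one_of_pos (div_pos hb ha)

lemma Real.exp_neg_mul_mem_Icc {θ x : ℝ} (hθ : 0 ≤ θ) (hx : x ∈ Set.Icc (0 : ℝ) 1) :
    exp (-θ * x) ∈ Set.Icc (exp (-θ)) 1 := by
  obtain ⟨hx0, hx1⟩ := hx
  refine ⟨exp_le_exp.2 ?_, exp_le_one_iff.2 ?_⟩ <;> nlinarith

noncomputable def mnlWeightedD {ι : Type*} (S : Finset ι) (w v : ι → ℝ) : ℝ :=
  1 + ∑ i ∈ S, w i * v i

section WeightedD

variable {ι : Type*} {S : Finset ι} {w v v' : ι → ℝ} {c : ℝ}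

lemma mnlD_pos (hv : ∀ i ∈ S, 0 ≤ v i) : 0 < mnlD S v := by
  unfold mnlD
  linarith [sum_nonneg hv]

lemma mnlD_sub_mnlD (S : Finset ι) (v v' : ι → ℝ) :
    mnlD S v' - mnlD S v = ∑ i ∈ S, (v' i - v i) := by
  unfold mnlD
  rw [sum_sub_distrib]
  ring

lemma mnlWeightedD_pos (hw : ∀ i ∈ S, 0 ≤ w i) (hv : ∀ i ∈ S, 0 ≤ v i) :
    0 < mnlWeightedD S w v := by
  unfold mnlWeightedD
  linarith [sum_nonneg fun i hi => mul_nonneg (hw i hi) (hv i hi)]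

lemma mnlWeightedD_le_mnlD (hw : ∀ i ∈ S, w i ≤ 1) (hv : ∀ i ∈ S, 0 ≤ v i) :
    mnlWeightedD S w v ≤ mnlD S v := by
  unfold mnlWeightedD mnlD
  gcongr with i hi
  exact mul_le_of_le_one_left (hv i hi) (hw i hi)

lemma mul_mnlD_le_mnlWeightedD (hc : c ≤ 1) (hw : ∀ i ∈ S, c ≤ w i)
    (hv : ∀ i ∈ S, 0 ≤ v i) : c * mnlD S v ≤ mnlWeightedD S w v := by
  unfold mnlWeightedD mnlD
  rw [mul_add, mul_one, mul_sum]
  exact add_le_add hc (sum_le_sum fun i hi => mul_le_mul_of_nonneg_right (hw i hi) (hv i hi))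

lemma mnlWeightedD_le_mnlWeightedD (hw : ∀ i ∈ S, 0 ≤ w i) (hvv' : ∀ i ∈ S, v i ≤ v' i) :
    mnlWeightedD S w v ≤ mnlWeightedD S w v' := by
  unfold mnlWeightedD
  gcongr with i hi
  exacts [hw i hi, hvv' i hi]

lemma mnlWeightedD_sub_mnlWeightedD_le (hw : ∀ i ∈ S, w i ≤ 1) (hvv' : ∀ i ∈ S, v i ≤ v' i) :
    mnlWeightedD S w v' - mnlWeightedD S w v ≤ ∑ i ∈ S, (v' i - v i) := by
  unfold mnlWeightedD
  rw [add_sub_add_left_eq_sub, ← sum_sub_distrib]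
  refine sum_le_sum fun i hi => ?_
  rw [← mul_sub]
  exact mul_le_of_le_one_left (sub_nonneg.2 (hvv' i hi)) (hw i hi)

end WeightedD

noncomputable def mnlLogRatio {ι : Type*} (S : Finset ι) (w v : ι → ℝ) : ℝ :=
  log (mnlD S v) - log (mnlWeightedD S w v)

section LogRatio

variable {ι : Type*} {S : Finset ι} {w v v' : ι → ℝ} {c : ℝ}

lemma mnlLogRatio_mem_Icc (hc : c ∈ Set.Ioc 0 1) (hw : ∀ i ∈ S, w i ∈ Set.Icc c 1)
    (hv : ∀ i ∈ S, 0 ≤ v i) : mnlLogRatio S w v ∈ Set.Icc 0 (-log c) := by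
  have hD := mnlD_pos hv
  have hW := mnlWeightedD_pos (fun i hi => hc.1.le.trans (hw i hi).1) hv
  have hWD := log_le_log hW (mnlWeightedD_le_mnlD (fun i hi => (hw i hi).2) hv)
  have hcDW := log_le_log (mul_pos hc.1 hD)
    (mul_mnlD_le_mnlWeightedD hc.2 (fun i hi => (hw i hi).1) hv)
  rw [log_mul hc.1.ne' hD.ne'] at hcDW
  unfold mnlLogRatio
  constructor <;> linarith

lemma abs_mnlLogRatio_sub_le (hc : c ∈ Set.Ioc 0 1) (hw : ∀ i ∈ S, w i ∈ Set.Icc c 1)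
    (hv : ∀ i ∈ S, 0 ≤ v i) (hvv' : ∀ i ∈ S, v i ≤ v' i) :
    |mnlLogRatio S w v' - mnlLogRatio S w v| ≤ (∑ i ∈ S, (v' i - v i)) / (c * mnlD S v) := by
  have hv' : ∀ i ∈ S, 0 ≤ v' i := fun i hi => (hv i hi).trans (hvv' i hi)
  have hw0 : ∀ i ∈ S, 0 ≤ w i := fun i hi => hc.1.le.trans (hw i hi).1
  have hD := mnlD_pos hv
  have hW := mnlWeightedD_pos hw0 hv
  have hcD : 0 < c * mnlD S v := mul_pos hc.1 hD
  have hΔ : 0 ≤ ∑ i ∈ S, (v' i - v i) := sum_nonneg fun i hi => sub_nonneg.2 (hvv' i hi)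
  rw [mnlLogRatio, mnlLogRatio, sub_sub_sub_comm]
  apply abs_sub_le_of_nonneg_of_le
  · refine sub_nonneg.2 (log_le_log hD ?_)
    linarith [mnlD_sub_mnlD S v v']
  · calc log (mnlD S v') - log (mnlD S v) ≤ (mnlD S v' - mnlD S v) / mnlD S v :=
          log_sub_log_le_div hD (mnlD_pos hv')
      _ = (∑ i ∈ S, (v' i - v i)) / mnlD S v := by rw [mnlD_sub_mnlD]
      _ ≤ (∑ i ∈ S, (v' i - v i)) / (c * mnlD S v) :=
          div_le_div_of_nonneg_left hΔ hcD (mul_le_of_le_one_left hD.le hc.2)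
  · exact sub_nonneg.2 (log_le_log hW (mnlWeightedD_le_mnlWeightedD hw0 hvv'))
  · calc log (mnlWeightedD S w v') - log (mnlWeightedD S w v)
          ≤ (mnlWeightedD S w v' - mnlWeightedD S w v) / mnlWeightedD S w v :=
          log_sub_log_le_div hW (mnlWeightedD_pos hw0 hv')
      _ ≤ (∑ i ∈ S, (v' i - v i)) / (c * mnlD S v) :=
          div_le_div₀ hΔ (mnlWeightedD_sub_mnlWeightedD_le (fun i hi => (hw i hi).2) hvv') hcD
            (mul_mnlD_le_mnlWeightedD hc.2 (fun i hi => (hw i hi).1) hv)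

end LogRatio

lemma mnlEntropyRisk_eq_mnlLogRatio_div {ι : Type*} {S : Finset ι} {r : ι → ℝ} {θ : ℝ}
    {v : ι → ℝ} (hv : ∀ i ∈ S, 0 ≤ v i) :
    mnlEntropyRisk S r θ v = mnlLogRatio S (fun i => exp (-θ * r i)) v / θ := by
  have hW := mnlWeightedD_pos (fun i _ => (exp_pos (-θ * r i)).le) hv
  unfold mnlEntropyRisk mnlLogRatio
  unfold mnlWeightedD at hW ⊢
  rw [log_div hW.ne' (mnlD_pos hv).ne']
  ring

/-- **Proposition (entropy risk: boundedness and Lipschitz condition).** -/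
theorem entropy_risk_bounded_and_lipschitz {ι : Type*} (S : Finset ι) (r : ι → ℝ)
    (hr : ∀ i ∈ S, 0 < r i ∧ r i ≤ 1) (θ : ℝ) (hθ : 0 < θ) :
    (∀ v : ι → ℝ, (∀ i ∈ S, 0 ≤ v i ∧ v i ≤ 1) →
      0 ≤ mnlEntropyRisk S r θ v ∧ mnlEntropyRisk S r θ v ≤ 1) ∧
    (∀ v v' : ι → ℝ, (∀ i ∈ S, 0 ≤ v i ∧ v i ≤ 1) → (∀ i ∈ S, 0 ≤ v' i ∧ v' i ≤ 1) →
      (∀ i ∈ S, v i ≤ v' i) →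
      |mnlEntropyRisk S r θ v' - mnlEntropyRisk S r θ v| ≤
        ((2 * Real.exp θ / θ) / mnlD S v) * ∑ i ∈ S, (v' i - v i)) := by
  have hc : exp (-θ) ∈ Set.Ioc 0 1 := ⟨exp_pos _, exp_le_one_iff.2 (by linarith)⟩
  have hw : ∀ i ∈ S, exp (-θ * r i) ∈ Set.Icc (exp (-θ)) 1 := fun i hi =>
    exp_neg_mul_mem_Icc hθ.le ⟨(hr i hi).1.le, (hr i hi).2⟩
  refine ⟨fun v hv => ?_, fun v v' hv _ hvv' => ?_⟩
  · have hv0 : ∀ i ∈ S, 0 ≤ v i := fun i hi => (hv i hi).1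
    obtain ⟨h0, h1⟩ := mnlLogRatio_mem_Icc hc hw hv0
    rw [log_exp, neg_neg] at h1
    rw [mnlEntropyRisk_eq_mnlLogRatio_div hv0]
    exact ⟨div_nonneg h0 hθ.le, div_le_one_of_le₀ h1 hθ.le⟩
  · have hv0 : ∀ i ∈ S, 0 ≤ v i := fun i hi => (hv i hi).1
    have hD := mnlD_pos hv0
    have hΔ : 0 ≤ ∑ i ∈ S, (v' i - v i) := sum_nonneg fun i hi => sub_nonneg.2 (hvv' i hi)
    rw [mnlEntropyRisk_eq_mnlLogRatio_div fun i hi => (hv0 i hi).trans (hvv' i hi),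
      mnlEntropyRisk_eq_mnlLogRatio_div hv0, ← sub_div, abs_div, abs_of_pos hθ]
    calc _ ≤ (∑ i ∈ S, (v' i - v i)) / (exp (-θ) * mnlD S v) / θ := by
          gcongr
          exact abs_mnlLogRatio_sub_le hc hw hv0 hvv'
      _ = (exp θ / θ / mnlD S v) * ∑ i ∈ S, (v' i - v i) := by
          rw [exp_neg]
          field_simp
      _ ≤ _ := by
          gcongr
          linarith [exp_pos θ]
end

section
/- Let h : ℝ → ℝ satisfy |h(x)| ≤ M for all x ∈ [0,1], and define the integral risk criterion of the MNL distribution by U_h(v) = ( h(0) + Σ_{i∈S} h(r_i) v_i ) / D(v) (the expectation of h(X) under the MNL distribution). Then for all v ≤ v' in [0,1]^S, |U_h(v') − U_h(v)| ≤ (2M/D(v)) · Σ_{i∈S}(v'_i − v_i). -/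
/-- The expectation of `h(X)` under the MNL purchase-profit distribution:
`U_h(v) = (h(0) + ∑_{i∈S} h(r i) v i) / D(v)`. -/
noncomputable def mnlIntegralRisk {ι : Type*} (S : Finset ι) (r : ι → ℝ) (h : ℝ → ℝ)
    (v : ι → ℝ) : ℝ :=
  (h 0 + ∑ i ∈ S, h (r i) * v i) / mnlD S v

/-- **Remark (integral risk criteria satisfy the Lipschitz condition).**
If `|h| ≤ M` on `[0,1]`, then for `v ≤ v'` in `[0,1]^S`,
`|U_h(v') − U_h(v)| ≤ (2M/D(v)) ∑_{i∈S} (v' i − v i)`. -/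
theorem integral_risk_lipschitz {ι : Type*} (S : Finset ι) (r : ι → ℝ)
    (hr : ∀ i ∈ S, 0 < r i ∧ r i ≤ 1) (h : ℝ → ℝ) (M : ℝ)
    (hM : ∀ x ∈ Set.Icc (0:ℝ) 1, |h x| ≤ M)
    (v v' : ι → ℝ) (hv : ∀ i ∈ S, 0 ≤ v i ∧ v i ≤ 1) (hv' : ∀ i ∈ S, 0 ≤ v' i ∧ v' i ≤ 1)
    (hle : ∀ i ∈ S, v i ≤ v' i) :
    |mnlIntegralRisk S r h v' - mnlIntegralRisk S r h v| ≤
      (2 * M / mnlD S v) * ∑ i ∈ S, (v' i - v i) := by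
  have hM0 : 0 ≤ M := le_trans (abs_nonneg _) (hM 0 (by simp))
  set D := mnlD S v with hD
  set D' := mnlD S v' with hD'
  have hDpos : 0 < D := by
    have : 0 ≤ ∑ i ∈ S, v i := Finset.sum_nonneg fun i hi => (hv i hi).1
    simp only [hD, mnlD]; linarith
  have hD'ge : D ≤ D' := by
    simp only [hD, hD', mnlD, add_le_add_iff_left]
    exact Finset.sum_le_sum hle
  have hD'pos : 0 < D' := lt_of_lt_of_le hDpos hD'ge
  set A := h 0 + ∑ i ∈ S, h (r i) * v i with hA
  set A' := h 0 + ∑ i ∈ S, h (r i) * v' i with hA'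
  set δ := ∑ i ∈ S, (v' i - v i) with hδ
  have hδ0 : 0 ≤ δ := Finset.sum_nonneg fun i hi => sub_nonneg.2 (hle i hi)
  have hDD' : D' = D + δ := by
    simp only [hD, hD', mnlD, hδ, Finset.sum_sub_distrib]; ring
  have hAbound : |A| ≤ M * D := by
    have h0 : |h 0| ≤ M := hM 0 (by simp)
    calc |A| ≤ |h 0| + |∑ i ∈ S, h (r i) * v i| := abs_add_le _ _
      _ ≤ M + ∑ i ∈ S, M * v i := by
          refine add_le_add h0 ?_
          refine le_trans (Finset.abs_sum_le_sum_abs _ _)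
            (Finset.sum_le_sum fun i hi => ?_)
          rw [abs_mul, abs_of_nonneg (hv i hi).1]
          exact mul_le_mul_of_nonneg_right
            (hM (r i) ⟨(hr i hi).1.le, (hr i hi).2⟩) (hv i hi).1
      _ = M * D := by rw [hD]; simp only [mnlD, ← Finset.mul_sum]; ring
  have hdiff : |A' - A| ≤ M * δ := by
    have hAA : A' - A = ∑ i ∈ S, h (r i) * (v' i - v i) := by
      simp only [hA, hA', mul_sub, Finset.sum_sub_distrib]; ring
    rw [hAA, hδ, Finset.mul_sum]
    refine le_trans (Finset.abs_sum_le_sum_abs _ _)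
      (Finset.sum_le_sum fun i hi => ?_)
    rw [abs_mul, abs_of_nonneg (sub_nonneg.2 (hle i hi))]
    exact mul_le_mul_of_nonneg_right
      (hM (r i) ⟨(hr i hi).1.le, (hr i hi).2⟩) (sub_nonneg.2 (hle i hi))
  have key : mnlIntegralRisk S r h v' - mnlIntegralRisk S r h v
      = (A' * D - A * D') / (D * D') := by
    simp only [mnlIntegralRisk, ← hD, ← hD', ← hA, ← hA']
    field_simp
  rw [key, abs_div, abs_of_pos (mul_pos hDpos hD'pos),
    div_le_iff₀ (mul_pos hDpos hD'pos)]
  have hnum : |A' * D - A * D'| ≤ 2 * M * D * δ := by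
    have hEq : A' * D - A * D' = (A' - A) * D - A * δ := by rw [hDD']; ring
    rw [hEq]
    calc |(A' - A) * D - A * δ| ≤ |(A' - A) * D| + |A * δ| := abs_sub _ _
      _ = |A' - A| * D + |A| * δ := by
          rw [abs_mul, abs_mul, abs_of_pos hDpos, abs_of_nonneg hδ0]
      _ ≤ M * δ * D + M * D * δ :=
          add_le_add (mul_le_mul_of_nonneg_right hdiff hDpos.le)
            (mul_le_mul_of_nonneg_right hAbound hδ0)
      _ = 2 * M * D * δ := by ring
  have hfin : 2 * M / D * δ * (D * D') = 2 * M * δ * D' := by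
    field_simp
  calc |A' * D - A * D'| ≤ 2 * M * D * δ := hnum
    _ ≤ 2 * M / D * δ * (D * D') := by
        rw [hfin]; nlinarith [mul_nonneg hM0 hδ0, hD'ge]
end

section
/- Let F : ℝ → ℝ be the cumulative distribution function of a random variable taking values in [0,1]; that is, F is monotone nondecreasing, right-continuous, F(x) = 0 for all x < 0, and F(x) = 1 for all x ≥ 1. For β ∈ (0,1], define the value-at-risk VaR_β(F) = inf{ x ∈ ℝ : F(x) ≥ β }. Then for every α ∈ (0,1], (1/α)·∫_0^α VaR_β(F) dβ = (1/α)·( α − ∫_0^1 min{F(x), α} dx ). -/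
/-!
Right-continuity makes the value-at-risk `q β = inf {x | β ≤ F x}` a lower adjoint of `F`:
`q β ≤ t ↔ β ≤ F t`. Hence `{β ∈ (0, α] | t < q β} = (F t, α]`, and the layer-cake formula gives
`∫₀^α q = ∫₀^∞ |(F t, α]| dt = ∫₀^1 (α - min (F t) α) dt`.
-/

open MeasureTheory Set

noncomputable def quantile (F : ℝ → ℝ) (β : ℝ) : ℝ := sInf {x | β ≤ F x}

section quantile

variable {F : ℝ → ℝ} {β : ℝ}

theorem le_apply_quantile (hrc : ∀ x, ContinuousWithinAt F (Ici x) x)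
    (hne : {x | β ≤ F x}.Nonempty) (hbdd : BddBelow {x | β ≤ F x}) :
    β ≤ F (quantile F β) := by
  by_contra! h
  obtain ⟨u, hu, hFu⟩ := mem_nhdsGE_iff_exists_Ico_subset.mp ((hrc _).eventually_lt_const h)
  obtain ⟨x, hx, hxu⟩ := (csInf_lt_iff hbdd hne).mp hu
  exact (hFu ⟨csInf_le hbdd hx, hxu⟩).not_ge (show β ≤ F x from hx)

theorem quantile_le_iff (hF : Monotone F) (hrc : ∀ x, ContinuousWithinAt F (Ici x) x)
    (hne : {x | β ≤ F x}.Nonempty) (hbdd : BddBelow {x | β ≤ F x}) {t : ℝ} :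
    quantile F β ≤ t ↔ β ≤ F t :=
  ⟨fun h => (le_apply_quantile hrc hne hbdd).trans (hF h), fun h => csInf_le hbdd h⟩

theorem one_mem_setOf_le (h1 : ∀ x, 1 ≤ x → F x = 1) (hβ : β ≤ 1) : 1 ∈ {x | β ≤ F x} :=
  show β ≤ F 1 by rwa [h1 1 le_rfl]

theorem zero_mem_lowerBounds_setOf_le (h0 : ∀ x, x < 0 → F x = 0) (hβ : 0 < β) :
    0 ∈ lowerBounds {x | β ≤ F x} := by
  intro x hx
  by_contra! h
  exact hβ.not_ge ((show β ≤ F x from hx).trans_eq (h0 x h))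

theorem quantile_mem_Icc (h0 : ∀ x, x < 0 → F x = 0) (h1 : ∀ x, 1 ≤ x → F x = 1)
    (hβ : β ∈ Ioc 0 1) : quantile F β ∈ Icc 0 1 :=
  ⟨le_csInf ⟨1, one_mem_setOf_le h1 hβ.2⟩ (zero_mem_lowerBounds_setOf_le h0 hβ.1),
    csInf_le ⟨0, zero_mem_lowerBounds_setOf_le h0 hβ.1⟩ (one_mem_setOf_le h1 hβ.2)⟩

theorem monotoneOn_quantile (h0 : ∀ x, x < 0 → F x = 0) (h1 : ∀ x, 1 ≤ x → F x = 1) :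
    MonotoneOn (quantile F) (Ioc 0 1) := fun _ hβ₁ _ hβ₂ h =>
  csInf_le_csInf ⟨0, zero_mem_lowerBounds_setOf_le h0 hβ₁.1⟩ ⟨1, one_mem_setOf_le h1 hβ₂.2⟩
    fun _ hx => h.trans hx

theorem lt_quantile_iff (hF : Monotone F) (hrc : ∀ x, ContinuousWithinAt F (Ici x) x)
    (h0 : ∀ x, x < 0 → F x = 0) (h1 : ∀ x, 1 ≤ x → F x = 1) (hβ : β ∈ Ioc 0 1)
    (t : ℝ) : t < quantile F β ↔ F t < β := by
  simpa only [not_le] using (quantile_le_iff hF hrc ⟨1, one_mem_setOf_le h1 hβ.2⟩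
    ⟨0, zero_mem_lowerBounds_setOf_le h0 hβ.1⟩ (t := t)).not

theorem nonneg_of_monotone_of_eq_zero_of_neg (hF : Monotone F) (h0 : ∀ x, x < 0 → F x = 0)
    (t : ℝ) : 0 ≤ F t :=
  (h0 _ (min_lt_of_right_lt neg_one_lt_zero)).symm.le.trans (hF (min_le_left t (-1)))

theorem setOf_lt_quantile_inter_Ioc (hF : Monotone F)
    (hrc : ∀ x, ContinuousWithinAt F (Ici x) x) (h0 : ∀ x, x < 0 → F x = 0)
    (h1 : ∀ x, 1 ≤ x → F x = 1) {α : ℝ} (hα : α ≤ 1) (t : ℝ) :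
    {β | t < quantile F β} ∩ Ioc 0 α = Ioc (F t) α := by
  ext β
  simp only [mem_inter_iff, mem_ofPred_eq, mem_Ioc]
  constructor
  · rintro ⟨ht, hβ0, hβα⟩
    exact ⟨(lt_quantile_iff hF hrc h0 h1 ⟨hβ0, hβα.trans hα⟩ t).mp ht, hβα⟩
  · rintro ⟨ht, hβα⟩
    have hβ0 : 0 < β := (nonneg_of_monotone_of_eq_zero_of_neg hF h0 t).trans_lt ht
    exact ⟨(lt_quantile_iff hF hrc h0 h1 ⟨hβ0, hβα.trans hα⟩ t).mpr ht, hβ0, hβα⟩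

theorem setIntegral_quantile_Ioc (hF : Monotone F)
    (hrc : ∀ x, ContinuousWithinAt F (Ici x) x) (h0 : ∀ x, x < 0 → F x = 0)
    (h1 : ∀ x, 1 ≤ x → F x = 1) {α : ℝ} (hα : α ≤ 1) :
    ∫ β in Ioc 0 α, quantile F β = ∫ t in Ioi 0, (α - min (F t) α) := by
  have hsub : Ioc 0 α ⊆ Ioc 0 1 := Ioc_subset_Ioc_right hα
  have hae : ∀ᵐ β ∂volume.restrict (Ioc 0 α), quantile F β ∈ Icc 0 1 :=
    ae_restrict_of_forall_mem measurableSet_Ioc fun β hβ => quantile_mem_Icc h0 h1 (hsub hβ)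
  have hmeas : AEMeasurable (quantile F) (volume.restrict (Ioc 0 α)) :=
    aemeasurable_restrict_of_monotoneOn measurableSet_Ioc ((monotoneOn_quantile h0 h1).mono hsub)
  have hint : Integrable (quantile F) (volume.restrict (Ioc 0 α)) :=
    .of_bound hmeas.aestronglyMeasurable 1
      (hae.mono fun β hβ => (Real.norm_of_nonneg hβ.1).trans_le hβ.2)
  rw [hint.integral_eq_integral_meas_lt (hae.mono fun β hβ => hβ.1)]
  refine setIntegral_congr_fun measurableSet_Ioi fun t _ => ?_
  rw [measureReal_restrict_apply' measurableSet_Ioc,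
    setOf_lt_quantile_inter_Ioc hF hrc h0 h1 hα, Real.volume_real_Ioc,
    ← max_sub_sub_left, sub_self]

theorem setIntegral_Ioi_sub_min (hF : Monotone F) (h1 : ∀ x, 1 ≤ x → F x = 1) {α : ℝ}
    (hα : α ≤ 1) : ∫ t in Ioi 0, (α - min (F t) α) = α - ∫ t in (0:ℝ)..1, min (F t) α := by
  have hvanish : ∀ t ∈ Ioi 0 \ Ioc 0 1, α - min (F t) α = 0 := fun t ht => by
    rw [h1 t (not_le.mp fun h => ht.2 ⟨ht.1, h⟩).le, min_eq_right hα, sub_self]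
  have hint : IntervalIntegrable (fun t => min (F t) α) volume 0 1 :=
    (hF.min monotone_const).monotoneOn _ |>.intervalIntegrable
  rw [setIntegral_eq_of_subset_of_forall_sdiff_eq_zero measurableSet_Ioi Ioc_subset_Ioi_self
      hvanish, ← intervalIntegral.integral_of_le zero_le_one,
    intervalIntegral.integral_sub intervalIntegrable_const hint, intervalIntegral.integral_const,
    sub_zero, one_smul]

end quantile

/-- **Lemma (equivalent definitions of CVaR).**
For the CDF `F` of a `[0,1]`-valued random variable and `α ∈ (0,1]`,
`(1/α) ∫_0^α VaR_β(F) dβ = (1/α)(α − ∫_0^1 min{F(x), α} dx)`,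
where `VaR_β(F) = inf {x : F(x) ≥ β}`. -/
theorem cvar_integral_eq (F : ℝ → ℝ) (hmono : Monotone F)
    (hrc : ∀ x : ℝ, ContinuousWithinAt F (Set.Ici x) x)
    (h0 : ∀ x : ℝ, x < 0 → F x = 0) (h1 : ∀ x : ℝ, 1 ≤ x → F x = 1)
    (α : ℝ) (hα0 : 0 < α) (hα1 : α ≤ 1) :
    (1 / α) * ∫ β in (0:ℝ)..α, sInf {x : ℝ | β ≤ F x} =
      (1 / α) * (α - ∫ x in (0:ℝ)..1, min (F x) α) := by
  change (1 / α) * ∫ β in (0:ℝ)..α, quantile F β = _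
  rw [intervalIntegral.integral_of_le hα0.le, setIntegral_quantile_Ioc hmono hrc h0 h1 hα1,
    setIntegral_Ioi_sub_min hmono h1 hα1]
end
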